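/- arXiv:1701.08087 — 4 statements merged into one kernel-verified Lean document; each statement's English description precedes it below -/
import Mathlib

section
/- Let R be a Noetherian ring, I = (f_1,...,f_r) an ideal of R, and M a finitely generated R-module. Then there exists a natural epimorphism φ: Sym_R(I) ⊗_R M ↠ H_0(Z_•(f;M)), which for M = R is the isomorphism H_0(Z_•(f;R)) ≅ Sym_R(I). Furthermore, φ is an isomorphism if and only if Tor_1^R(R/I, M) = 0. -/
/-!
Formalization of statements from:
"Cohen-Macaulayness and canonical module of residual intersections"
(Chardin, Naeliton, Tran).
-/

noncomputable section
open RingTheory.Sequence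
open scoped TensorProduct

/-- The polynomial ring `S = R[T_1, …, T_r]`. -/
abbrev SS (R : Type) [CommRing R] (r : ℕ) := MvPolynomial (Fin r) R

/-- `M[T_1, …, T_r] = S ⊗_R M`. -/
abbrev MT (R : Type) [CommRing R] (M : Type) [AddCommGroup M] [Module R M] (r : ℕ) :=
  SS R r ⊗[R] M

/-- The linear form `c_1 T_1 + ⋯ + c_r T_r` with coefficients `c_i ∈ M`. -/
noncomputable def linForm (R : Type) [CommRing R] (M : Type) [AddCommGroup M] [Module R M]
    (r : ℕ) (c : Fin r → M) : MT R M r :=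
  ∑ i, (MvPolynomial.X i : SS R r) ⊗ₜ[R] (c i)

/-- The degree `k` homogeneous component of `M[T_1, …, T_r]`. -/
noncomputable def mtGrade (R : Type) [CommRing R] (M : Type) [AddCommGroup M] [Module R M]
    (r : ℕ) (k : ℕ) : Submodule R (MT R M r) :=
  LinearMap.range (LinearMap.rTensor M (MvPolynomial.homogeneousSubmodule (Fin r) R k).subtype)

/-- The module of syzygies `Z_1(f; M) = {c ∈ M^r | ∑ f_i c_i = 0}` (the `1`-cycles of
the Koszul complex with coefficients in `M`). -/
noncomputable def syzMod (R : Type) [CommRing R] (M : Type) [AddCommGroup M] [Module R M]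
    (r : ℕ) (f : Fin r → R) : Submodule R (Fin r → M) :=
  LinearMap.ker (∑ i, f i • (LinearMap.proj i : (Fin r → M) →ₗ[R] M))

/-- The image of `Z_1(f; R) ⊗ M` inside `Z_1(f; M)`. -/
noncomputable def syzImage (R : Type) [CommRing R] (M : Type) [AddCommGroup M] [Module R M]
    (r : ℕ) (f : Fin r → R) : Submodule R (Fin r → M) :=
  Submodule.span R {v : Fin r → M | ∃ z ∈ syzMod R R r f, ∃ m : M, v = fun i => z i • m}

/-- `𝔏_M`: the `S`-submodule of `M[T]` generated by the linear forms with coefficient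
vector in `Z_1(f; M)`. -/
noncomputable def LMfull (R : Type) [CommRing R] (M : Type) [AddCommGroup M] [Module R M]
    (r : ℕ) (f : Fin r → R) : Submodule (SS R r) (MT R M r) :=
  Submodule.span (SS R r) {x | ∃ c ∈ syzMod R M r f, x = linForm R M r c}

/-- `𝔏M`: the image of `𝔏 ⊗_R M`, i.e. the `S`-submodule of `M[T]` generated by the
linear forms with coefficient vector in the image of `Z_1(f; R) ⊗ M`. -/
noncomputable def LMsmall (R : Type) [CommRing R] (M : Type) [AddCommGroup M] [Module R M]
    (r : ℕ) (f : Fin r → R) : Submodule (SS R r) (MT R M r) :=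
  Submodule.span (SS R r) {x | ∃ c ∈ syzImage R M r f, x = linForm R M r c}

/-- The commutativity relation defining the symmetric algebra. -/
inductive SymmRel (R : Type) [CommRing R] (N : Type) [AddCommGroup N] [Module R N] :
    TensorAlgebra R N → TensorAlgebra R N → Prop
  | comm (x y : N) : SymmRel R N (TensorAlgebra.ι R x * TensorAlgebra.ι R y)
      (TensorAlgebra.ι R y * TensorAlgebra.ι R x)

/-- The symmetric algebra `Sym_R(N)` of the module `N`. -/
noncomputable def SymmetricAlg (R : Type) [CommRing R] (N : Type) [AddCommGroup N]
    [Module R N] : Type :=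
  RingQuot (SymmRel R N)

noncomputable instance (R : Type) [CommRing R] (N : Type) [AddCommGroup N] [Module R N] :
    Ring (SymmetricAlg R N) := by
  unfold SymmetricAlg; infer_instance

noncomputable instance (R : Type) [CommRing R] (N : Type) [AddCommGroup N] [Module R N] :
    Algebra R (SymmetricAlg R N) := by
  unfold SymmetricAlg; infer_instance

private theorem symmetricAlg_mul_comm (R : Type) [CommRing R] (N : Type) [AddCommGroup N]
    [Module R N] (x y : SymmetricAlg R N) : x * y = y * x := by
  have key : ∀ a b : TensorAlgebra R N,
      Commute (RingQuot.mkAlgHom R (SymmRel R N) a) (RingQuot.mkAlgHom R (SymmRel R N) b) := by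
    intro a
    induction a using TensorAlgebra.induction with
    | algebraMap r =>
      intro b
      have h : (RingQuot.mkAlgHom R (SymmRel R N)) ((algebraMap R (TensorAlgebra R N)) r)
          = algebraMap R (SymmetricAlg R N) r := AlgHom.commutes _ r
      rw [h]
      exact Algebra.commute_algebraMap_left r _
    | ι v =>
      intro b
      induction b using TensorAlgebra.induction with
      | algebraMap r =>
        have h : (RingQuot.mkAlgHom R (SymmRel R N)) ((algebraMap R (TensorAlgebra R N)) r)
            = algebraMap R (SymmetricAlg R N) r := AlgHom.commutes _ r
        rw [h]
        exact (Algebra.commute_algebraMap_left r _).symm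
      | ι w =>
        have h := RingQuot.mkAlgHom_rel R (@SymmRel.comm R _ N _ _ v w)
        rw [map_mul, map_mul] at h
        exact h
      | mul b c hb hc => rw [map_mul]; exact Commute.mul_right hb hc
      | add b c hb hc => rw [map_add]; exact Commute.add_right hb hc
    | mul a b ha hb => intro c; rw [map_mul]; exact Commute.mul_left (ha c) (hb c)
    | add a b ha hb => intro c; rw [map_add]; exact Commute.add_left (ha c) (hb c)
  obtain ⟨a, rfl⟩ := RingQuot.mkAlgHom_surjective R (SymmRel R N) x
  obtain ⟨b, rfl⟩ := RingQuot.mkAlgHom_surjective R (SymmRel R N) y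
  exact key a b

noncomputable instance (R : Type) [CommRing R] (N : Type) [AddCommGroup N] [Module R N] :
    CommRing (SymmetricAlg R N) :=
  { (inferInstance : Ring (SymmetricAlg R N)) with
    mul_comm := symmetricAlg_mul_comm R N }

/-- The canonical inclusion `N → Sym_R(N)`. -/
noncomputable def symmIota (R : Type) [CommRing R] (N : Type) [AddCommGroup N]
    [Module R N] : N →ₗ[R] SymmetricAlg R N :=
  (RingQuot.mkAlgHom R (SymmRel R N)).toLinearMap.comp (TensorAlgebra.ι R)

/-- The `k`-th symmetric power `Sym_R^k(N)`, as a submodule of the symmetric algebra. -/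
noncomputable def symPow (R : Type) [CommRing R] (N : Type) [AddCommGroup N] [Module R N]
    (k : ℕ) : Submodule R (SymmetricAlg R N) :=
  LinearMap.range (symmIota R N) ^ k

/-- Multiplication pairing between symmetric powers. -/
noncomputable def symMul (R : Type) [CommRing R] (N : Type) [AddCommGroup N] [Module R N]
    (a b : ℕ) : ↥(symPow R N a) →ₗ[R] ↥(symPow R N b) →ₗ[R] ↥(symPow R N (a + b)) where
  toFun x :=
    { toFun := fun y => ⟨(x : SymmetricAlg R N) * (y : SymmetricAlg R N), by
        rw [symPow, pow_add]
        exact Submodule.mul_mem_mul x.2 y.2⟩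
      map_add' := fun y z => Subtype.ext (by simp [mul_add])
      map_smul' := fun c y => Subtype.ext (by simp [mul_smul_comm]) }
  map_add' x x' := LinearMap.ext fun y => Subtype.ext (by simp [add_mul])
  map_smul' c x := LinearMap.ext fun y => Subtype.ext (by simp [smul_mul_assoc])

/-- A bilinear pairing is perfect if both induced maps to the `Hom` modules
are bijective. -/
def IsPerfectPairing {R M N L : Type} [CommRing R] [AddCommGroup M] [AddCommGroup N]
    [AddCommGroup L] [Module R M] [Module R N] [Module R L]
    (B : M →ₗ[R] N →ₗ[R] L) : Prop :=
  Function.Bijective B ∧ Function.Bijective B.flip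

/-- The quotient module `I/𝔞` of two ideals. -/
noncomputable def IdealQuot (R : Type) [CommRing R] (I 𝔞 : Ideal R) : Type :=
  I ⧸ Submodule.comap I.subtype 𝔞

noncomputable instance (R : Type) [CommRing R] (I 𝔞 : Ideal R) :
    AddCommGroup (IdealQuot R I 𝔞) := by
  unfold IdealQuot; infer_instance

noncomputable instance (R : Type) [CommRing R] (I 𝔞 : Ideal R) :
    Module R (IdealQuot R I 𝔞) := by
  unfold IdealQuot; infer_instance
instance symTensorAddCommGroup (R : Type) [CommRing R] (N M : Type) [AddCommGroup N] [Module R N]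
    [AddCommGroup M] [Module R M] : AddCommGroup (SymmetricAlg R N ⊗[R] M) :=
  { (inferInstance : AddCommMonoid (SymmetricAlg R N ⊗[R] M)),
    (@TensorProduct.addCommGroup R _ _ _ (Ring.toAddCommGroup) _
      (Algebra.toModule (A := SymmetricAlg R N)) _ : AddCommGroup (SymmetricAlg R N ⊗[R] M)) with }
section Aux
variable (R : Type) [CommRing R] (M : Type) [AddCommGroup M] [Module R M]
  {r : ℕ} (f : Fin r → R) (I : Ideal R)

lemma mem_syzMod (c : Fin r → M) :
    c ∈ syzMod R M r f ↔ ∑ i, f i • c i = 0 := by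
  simp [syzMod, LinearMap.mem_ker, LinearMap.sum_apply]

/-- the elements `f i` as elements of `I`. -/
private def fI (hf : ∀ i, f i ∈ I) (i : Fin r) : I := ⟨f i, hf i⟩

/-- the map `R^r → I`, `c ↦ ∑ cᵢ fᵢ`. -/
private def piMap (hf : ∀ i, f i ∈ I) : (Fin r → R) →ₗ[R] I :=
  ∑ i, LinearMap.toSpanSingleton R I (fI R f I hf i) ∘ₗ LinearMap.proj i

lemma piMap_apply (hf : ∀ i, f i ∈ I) (c : Fin r → R) :
    piMap R f I hf c = ∑ i, c i • fI R f I hf i := by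
  simp [piMap, LinearMap.toSpanSingleton, LinearMap.sum_apply]

lemma piMap_coe (hf : ∀ i, f i ∈ I) (c : Fin r → R) :
    (piMap R f I hf c : R) = ∑ i, c i * f i := by
  rw [piMap_apply]
  simp [fI, smul_eq_mul]

lemma piMap_surjective (hf : ∀ i, f i ∈ I) (hI : I = Ideal.span (Set.range f)) :
    Function.Surjective (piMap R f I hf) := by
  rintro ⟨x, hx⟩
  rw [hI, Ideal.span, Submodule.mem_span_range_iff_exists_fun] at hx
  obtain ⟨c, hc⟩ := hx
  exact ⟨c, Subtype.ext (by rw [piMap_coe]; simpa [mul_comm] using hc)⟩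

lemma piMap_eq_zero_iff (hf : ∀ i, f i ∈ I) (c : Fin r → R) :
    piMap R f I hf c = 0 ↔ c ∈ syzMod R R r f := by
  rw [mem_syzMod]
  constructor
  · intro h
    have := congrArg (Subtype.val) h
    rw [piMap_coe] at this
    simpa [smul_eq_mul, mul_comm] using this
  · intro h
    apply Subtype.ext
    rw [piMap_coe]
    simpa [smul_eq_mul, mul_comm] using h

lemma piMap_single (hf : ∀ i, f i ∈ I) (i : Fin r) :
    piMap R f I hf (Pi.single i 1) = fI R f I hf i := by
  apply Subtype.ext
  rw [piMap_coe]
  simp [Pi.single_apply, fI]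

end Aux
section Aux2
variable (R : Type) [CommRing R] (M : Type) [AddCommGroup M] [Module R M]
  {r : ℕ} (f : Fin r → R) (I : Ideal R)

/-- the ideal of `S` generated by the syzygy linear forms. -/
private def JJ : Ideal (SS R r) :=
  Ideal.span {q | ∃ z ∈ syzMod R R r f, q = ∑ i, z i • MvPolynomial.X i}

/-- the algebra map `S → Sym(I)`, `X i ↦ ι (f i)`. -/
private def AA (hf : ∀ i, f i ∈ I) : SS R r →ₐ[R] SymmetricAlg R ↥I :=
  MvPolynomial.aeval (fun i => symmIota R ↥I (fI R f I hf i))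

/-- the linear map `R^r → S`, `c ↦ ∑ cᵢ Xᵢ`. -/
private def LX : (Fin r → R) →ₗ[R] SS R r :=
  ∑ i, LinearMap.toSpanSingleton R (SS R r) (MvPolynomial.X i) ∘ₗ LinearMap.proj i

lemma LX_apply (c : Fin r → R) : LX R (r := r) c = ∑ i, c i • MvPolynomial.X i := by
  simp [LX, LinearMap.toSpanSingleton, LinearMap.sum_apply]

lemma LX_single (i : Fin r) : LX R (r := r) (Pi.single i 1) = MvPolynomial.X i := by
  rw [LX_apply]
  simp [Pi.single_apply]

lemma AA_LX (hf : ∀ i, f i ∈ I) (c : Fin r → R) :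
    AA R f I hf (LX R c) = symmIota R ↥I (piMap R f I hf c) := by
  rw [LX_apply, piMap_apply, map_sum, map_sum]
  simp [AA]

lemma AA_JJ (hf : ∀ i, f i ∈ I) : ∀ a ∈ JJ R f, AA R f I hf a = 0 := by
  intro a ha
  have hle : JJ R f ≤ RingHom.ker (AA R f I hf) := by
    rw [JJ, Ideal.span_le]
    rintro q ⟨z, hz, rfl⟩
    have : (∑ i, z i • MvPolynomial.X i : SS R r) = LX R z := (LX_apply R z).symm
    rw [SetLike.mem_coe, RingHom.mem_ker, this, AA_LX]
    rw [← piMap_eq_zero_iff R f I hf] at hz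
    rw [hz, map_zero]
  exact hle ha

/-- the algebra map `S/J → Sym(I)`. -/
private def PsiP (hf : ∀ i, f i ∈ I) : (SS R r ⧸ JJ R f) →ₐ[R] SymmetricAlg R ↥I :=
  Ideal.Quotient.liftₐ (JJ R f) (AA R f I hf) (AA_JJ R f I hf)

lemma PsiP_mk (hf : ∀ i, f i ∈ I) (p : SS R r) :
    PsiP R f I hf (Ideal.Quotient.mk (JJ R f) p) = AA R f I hf p := by
  simp [PsiP, Ideal.Quotient.liftₐ_apply, Ideal.Quotient.lift_mk]
  rfl

/-- the linear map `R^r → S/J`. -/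
private def lamZ : (Fin r → R) →ₗ[R] (SS R r ⧸ JJ R f) :=
  (Ideal.Quotient.mkₐ R (JJ R f)).toLinearMap ∘ₗ LX R

lemma lamZ_apply (c : Fin r → R) :
    lamZ R f c = Ideal.Quotient.mk (JJ R f) (LX R c) := rfl

lemma ker_piMap_le (hf : ∀ i, f i ∈ I) :
    LinearMap.ker (piMap R f I hf) ≤ LinearMap.ker (lamZ R f) := by
  intro c hc
  rw [LinearMap.mem_ker] at hc ⊢
  rw [lamZ_apply, Ideal.Quotient.eq_zero_iff_mem]
  rw [piMap_eq_zero_iff] at hc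
  exact Ideal.subset_span ⟨c, hc, (LX_apply R c)⟩

/-- the linear map `I → S/J`. -/
private def ellI (hf : ∀ i, f i ∈ I) (hI : I = Ideal.span (Set.range f)) :
    ↥I →ₗ[R] (SS R r ⧸ JJ R f) :=
  (Submodule.liftQ _ (lamZ R f) (ker_piMap_le R f I hf)) ∘ₗ
    ((piMap R f I hf).quotKerEquivOfSurjective (piMap_surjective R f I hf hI)).symm.toLinearMap

lemma ellI_piMap (hf : ∀ i, f i ∈ I) (hI : I = Ideal.span (Set.range f)) (c : Fin r → R) :
    ellI R f I hf hI (piMap R f I hf c) = lamZ R f c := by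
  set e := (piMap R f I hf).quotKerEquivOfSurjective (piMap_surjective R f I hf hI) with he
  have h1 : e.symm (piMap R f I hf c) = Submodule.Quotient.mk c := by
    apply e.injective
    rw [LinearEquiv.apply_symm_apply]
    simp [he, LinearMap.quotKerEquivOfSurjective]
  show Submodule.liftQ _ (lamZ R f) (ker_piMap_le R f I hf) (e.symm (piMap R f I hf c)) = _
  rw [h1, Submodule.liftQ_apply]

end Aux2
section Aux3
variable (R : Type) [CommRing R] {r : ℕ} (f : Fin r → R) (I : Ideal R)

/-- the algebra map `Sym(I) → S/J`. -/
private def PhiS (hf : ∀ i, f i ∈ I) (hI : I = Ideal.span (Set.range f)) :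
    SymmetricAlg R ↥I →ₐ[R] (SS R r ⧸ JJ R f) :=
  RingQuot.liftAlgHom R ⟨TensorAlgebra.lift R (ellI R f I hf hI), by
    rintro x y ⟨a, b⟩
    simp only [map_mul, TensorAlgebra.lift_ι_apply]
    exact mul_comm _ _⟩

lemma PhiS_iota (hf : ∀ i, f i ∈ I) (hI : I = Ideal.span (Set.range f)) (x : ↥I) :
    PhiS R f I hf hI (symmIota R ↥I x) = ellI R f I hf hI x := by
  show PhiS R f I hf hI (RingQuot.mkAlgHom R (SymmRel R ↥I) (TensorAlgebra.ι R x)) = _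
  rw [PhiS]
  have h := RingQuot.liftAlgHom_mkAlgHom_apply (S := R)
    (TensorAlgebra.lift R (ellI R f I hf hI)) (s := SymmRel R ↥I)
    (by rintro x y ⟨a, b⟩
        simp only [map_mul, TensorAlgebra.lift_ι_apply]
        exact mul_comm _ _) (TensorAlgebra.ι R x)
  exact h.trans (TensorAlgebra.lift_ι_apply _ _)

lemma PsiP_ellI (hf : ∀ i, f i ∈ I) (hI : I = Ideal.span (Set.range f)) (x : ↥I) :
    PsiP R f I hf (ellI R f I hf hI x) = symmIota R ↥I x := by
  obtain ⟨c, rfl⟩ := piMap_surjective R f I hf hI x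
  rw [ellI_piMap, lamZ_apply, PsiP_mk, AA_LX]

lemma PsiP_PhiS (hf : ∀ i, f i ∈ I) (hI : I = Ideal.span (Set.range f)) :
    (PsiP R f I hf).comp (PhiS R f I hf hI) = AlgHom.id R (SymmetricAlg R ↥I) := by
  apply RingQuot.ringQuot_ext'
  apply TensorAlgebra.hom_ext
  apply LinearMap.ext
  intro x
  show PsiP R f I hf (PhiS R f I hf hI (RingQuot.mkAlgHom R (SymmRel R ↥I) (TensorAlgebra.ι R x)))
      = RingQuot.mkAlgHom R (SymmRel R ↥I) (TensorAlgebra.ι R x)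
  have : PhiS R f I hf hI (RingQuot.mkAlgHom R (SymmRel R ↥I) (TensorAlgebra.ι R x))
      = ellI R f I hf hI x := PhiS_iota R f I hf hI x
  rw [this, PsiP_ellI]
  rfl

lemma PhiS_PsiP (hf : ∀ i, f i ∈ I) (hI : I = Ideal.span (Set.range f)) :
    (PhiS R f I hf hI).comp (PsiP R f I hf) = AlgHom.id R (SS R r ⧸ JJ R f) := by
  apply Ideal.Quotient.algHom_ext
  apply MvPolynomial.algHom_ext
  intro i
  show PhiS R f I hf hI (PsiP R f I hf (Ideal.Quotient.mk (JJ R f) (MvPolynomial.X i)))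
      = Ideal.Quotient.mk (JJ R f) (MvPolynomial.X i)
  rw [PsiP_mk]
  have h1 : AA R f I hf (MvPolynomial.X i) = symmIota R ↥I (fI R f I hf i) := by
    simp [AA]
  rw [h1, PhiS_iota, ← piMap_single R f I hf, ellI_piMap, lamZ_apply, LX_single]

/-- the algebra equivalence `Sym(I) ≃ S/J`. -/
private def EE (hf : ∀ i, f i ∈ I) (hI : I = Ideal.span (Set.range f)) :
    SymmetricAlg R ↥I ≃ₐ[R] (SS R r ⧸ JJ R f) :=
  AlgEquiv.ofAlgHom (PhiS R f I hf hI) (PsiP R f I hf)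
    (PhiS_PsiP R f I hf hI) (PsiP_PhiS R f I hf hI)

end Aux3
section Aux4
variable (R : Type) [CommRing R] {r : ℕ} (f : Fin r → R) (I : Ideal R)

private lemma rid_mul_smul (p : SS R r) (y : MT R R r) :
    TensorProduct.rid R (SS R r) (p • y) = p * TensorProduct.rid R (SS R r) y := by
  induction y using TensorProduct.induction_on with
  | zero => simp
  | tmul s c =>
    rw [TensorProduct.smul_tmul']
    simp only [TensorProduct.rid_tmul, smul_eq_mul]
    rw [mul_smul_comm]
  | add x y hx hy => rw [smul_add, map_add, map_add, mul_add, hx, hy]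

private lemma map_LMfull_eq :
    (Submodule.restrictScalars R (LMfull R R r f)).map
      (TensorProduct.rid R (SS R r)).toLinearMap = Submodule.restrictScalars R (JJ R f) := by
  apply le_antisymm
  · rintro x ⟨y, hy, rfl⟩
    simp only [Submodule.restrictScalars_mem] at hy ⊢
    refine Submodule.span_induction ?_ ?_ ?_ ?_ hy
    · rintro x ⟨c, hc, rfl⟩
      have : (TensorProduct.rid R (SS R r)).toLinearMap (linForm R R r c)
          = ∑ i, c i • MvPolynomial.X i := by
        simp [linForm, TensorProduct.rid_tmul]
      rw [this]
      exact Ideal.subset_span ⟨c, hc, rfl⟩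
    · simp
    · intro x y _ _ hx hy
      rw [map_add]; exact Ideal.add_mem _ hx hy
    · intro a x _ hx
      show (TensorProduct.rid R (SS R r)) (a • x) ∈ JJ R f
      rw [rid_mul_smul]
      exact Ideal.mul_mem_left _ _ hx
  · intro x hx
    simp only [Submodule.restrictScalars_mem] at hx
    have key : ∀ q ∈ JJ R f, (TensorProduct.rid R (SS R r)).symm q
        ∈ LMfull R R r f := by
      intro q hq
      refine Submodule.span_induction ?_ ?_ ?_ ?_ hq
      · rintro x ⟨z, hz, rfl⟩
        have : (TensorProduct.rid R (SS R r)).symm (∑ i, z i • MvPolynomial.X i)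
            = linForm R R r z := by
          rw [map_sum, linForm]
          congr 1
          funext i
          rw [TensorProduct.rid_symm_apply, TensorProduct.smul_tmul, smul_eq_mul, mul_one]
        rw [this]
        exact Submodule.subset_span ⟨z, hz, rfl⟩
      · simp
      · intro x y _ _ hx hy
        rw [map_add]; exact Submodule.add_mem _ hx hy
      · intro a x _ hx
        have : (TensorProduct.rid R (SS R r)).symm (a • x)
            = a • (TensorProduct.rid R (SS R r)).symm x := by
          apply (TensorProduct.rid R (SS R r)).injective
          rw [LinearEquiv.apply_symm_apply, rid_mul_smul, LinearEquiv.apply_symm_apply]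
          rfl
        rw [this]
        exact Submodule.smul_mem _ _ hx
    refine ⟨(TensorProduct.rid R (SS R r)).symm x, ?_, LinearEquiv.apply_symm_apply _ x⟩
    simpa using key x hx

/-- Part 2: `Sym(I) ≃ₗ (S ⊗ R) ⧸ 𝔏`. -/
private def part2equiv (hf : ∀ i, f i ∈ I) (hI : I = Ideal.span (Set.range f)) :
    SymmetricAlg R ↥I ≃ₗ[R]
      ((MT R R r) ⧸ (Submodule.restrictScalars R (LMfull R R r f))) :=
  (EE R f I hf hI).toLinearEquiv.trans
    (((Submodule.Quotient.restrictScalarsEquiv R (JJ R f)).symm).trans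
      ((Submodule.Quotient.equiv (Submodule.restrictScalars R (LMfull R R r f))
        (Submodule.restrictScalars R (JJ R f)) (TensorProduct.rid R (SS R r))
        (map_LMfull_eq R f)).symm))

end Aux4
section Aux5
variable (R : Type) [CommRing R] (M : Type) [AddCommGroup M] [Module R M]
  {r : ℕ} (f : Fin r → R) (I : Ideal R)

private lemma syzImage_le_syzMod : syzImage R M r f ≤ syzMod R M r f := by
  rw [syzImage, Submodule.span_le]
  rintro v ⟨z, hz, m, rfl⟩
  rw [SetLike.mem_coe, mem_syzMod]
  rw [mem_syzMod] at hz
  calc ∑ i, f i • (z i • m) = ∑ i, (f i • z i) • m := by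
        simp [smul_smul, smul_eq_mul]
      _ = (∑ i, f i • z i) • m := by rw [Finset.sum_smul]
      _ = 0 := by rw [hz, zero_smul]

private lemma LMsmall_le_LMfull : LMsmall R M r f ≤ LMfull R M r f := by
  rw [LMsmall, Submodule.span_le]
  rintro x ⟨c, hc, rfl⟩
  exact Submodule.subset_span ⟨c, syzImage_le_syzMod R M f hc, rfl⟩

/-- bilinear map `S → M → (S⊗M)/𝔏M`. -/
private def BB : SS R r →ₗ[R] M →ₗ[R]
    ((MT R M r) ⧸ (Submodule.restrictScalars R (LMsmall R M r f))) :=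
  (TensorProduct.mk R (SS R r) M).compr₂ (Submodule.restrictScalars R (LMsmall R M r f)).mkQ

private lemma tmul_mem_LMsmall : ∀ s ∈ JJ R f, ∀ m : M,
    s ⊗ₜ[R] m ∈ LMsmall R M r f := by
  intro s hs
  refine Submodule.span_induction ?_ ?_ ?_ ?_ hs
  · rintro q ⟨z, hz, rfl⟩
    intro m
    have h1 : ((∑ i, z i • MvPolynomial.X i : SS R r)) ⊗ₜ[R] m
        = linForm R M r (fun i => z i • m) := by
      rw [TensorProduct.sum_tmul, linForm]
      congr 1
      funext i
      rw [TensorProduct.smul_tmul]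
    rw [h1]
    exact Submodule.subset_span ⟨fun i => z i • m,
      Submodule.subset_span ⟨z, hz, m, rfl⟩, rfl⟩
  · intro m; rw [TensorProduct.zero_tmul]; exact Submodule.zero_mem _
  · intro x y _ _ hx hy m
    rw [TensorProduct.add_tmul]; exact Submodule.add_mem _ (hx m) (hy m)
  · intro a x _ hx m
    rw [(TensorProduct.smul_tmul' a x m).symm]
    exact Submodule.smul_mem _ a (hx m)

private lemma BB_ker : (JJ R f).restrictScalars R ≤ LinearMap.ker (BB R M f) := by
  intro s hs
  rw [LinearMap.mem_ker]
  apply LinearMap.ext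
  intro m
  simp only [BB, LinearMap.compr₂_apply, TensorProduct.mk_apply, LinearMap.zero_apply,
    Submodule.mkQ_apply, Submodule.Quotient.mk_eq_zero, Submodule.restrictScalars_mem]
  exact tmul_mem_LMsmall R M f s hs m

/-- the map `(S/J) ⊗ M → (S⊗M)/𝔏M`. -/
private def psm : ((SS R r ⧸ JJ R f) ⊗[R] M) →ₗ[R]
    ((MT R M r) ⧸ (Submodule.restrictScalars R (LMsmall R M r f))) :=
  TensorProduct.lift
    ((Submodule.liftQ ((JJ R f).restrictScalars R) (BB R M f) (BB_ker R M f)) ∘ₗ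
      (Submodule.Quotient.restrictScalarsEquiv R (JJ R f)).symm.toLinearMap)

private lemma psm_tmul (p : SS R r) (m : M) :
    psm R M f ((Ideal.Quotient.mk (JJ R f) p) ⊗ₜ[R] m)
      = Submodule.Quotient.mk (p ⊗ₜ[R] m) := by
  have h0 : (Ideal.Quotient.mk (JJ R f) p : SS R r ⧸ JJ R f)
      = Submodule.Quotient.mk p := rfl
  rw [psm, TensorProduct.lift.tmul, h0]
  simp only [LinearMap.comp_apply, LinearEquiv.coe_toLinearMap,
    Submodule.Quotient.restrictScalarsEquiv_symm_mk, Submodule.liftQ_apply]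
  rfl

/-- the map `Sym(I) ⊗ M → (S⊗M)/𝔏M`. -/
private def psi0 (hf : ∀ i, f i ∈ I) (hI : I = Ideal.span (Set.range f)) :
    (SymmetricAlg R ↥I ⊗[R] M) →ₗ[R]
      ((MT R M r) ⧸ (Submodule.restrictScalars R (LMsmall R M r f))) :=
  psm R M f ∘ₗ LinearMap.rTensor M (PhiS R f I hf hI).toLinearMap

private lemma psi0_surjective (hf : ∀ i, f i ∈ I) (hI : I = Ideal.span (Set.range f)) :
    Function.Surjective (psi0 R M f I hf hI) := by
  intro q
  obtain ⟨x, rfl⟩ := Submodule.Quotient.mk_surjective _ q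
  suffices h : Submodule.Quotient.mk x ∈ LinearMap.range (psi0 R M f I hf hI) by
    obtain ⟨w, hw⟩ := h; exact ⟨w, hw⟩
  induction x using TensorProduct.induction_on with
  | zero =>
    have : (Submodule.Quotient.mk (0 : MT R M r) :
        (MT R M r) ⧸ (Submodule.restrictScalars R (LMsmall R M r f))) = 0 := by simp
    rw [this]; exact Submodule.zero_mem _
  | tmul s m =>
    refine ⟨PsiP R f I hf (Ideal.Quotient.mk (JJ R f) s) ⊗ₜ[R] m, ?_⟩
    rw [psi0, LinearMap.comp_apply, LinearMap.rTensor_tmul]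
    have h1 : (PhiS R f I hf hI).toLinearMap (PsiP R f I hf (Ideal.Quotient.mk (JJ R f) s))
        = Ideal.Quotient.mk (JJ R f) s := by
      have := congrArg (fun (g : (SS R r ⧸ JJ R f) →ₐ[R] (SS R r ⧸ JJ R f)) =>
        g (Ideal.Quotient.mk (JJ R f) s)) (PhiS_PsiP R f I hf hI)
      simpa using this
    rw [h1, psm_tmul]
  | add x y hx hy =>
    rw [Submodule.Quotient.mk_add]
    exact Submodule.add_mem _ hx hy

private lemma rT_AA_smul (hf : ∀ i, f i ∈ I) (a : SS R r) (x : MT R M r) :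
    LinearMap.rTensor M (AA R f I hf).toLinearMap (a • x)
      = AA R f I hf a • LinearMap.rTensor M (AA R f I hf).toLinearMap x := by
  induction x using TensorProduct.induction_on with
  | zero => simp
  | tmul s m =>
    rw [TensorProduct.smul_tmul', LinearMap.rTensor_tmul, LinearMap.rTensor_tmul,
      TensorProduct.smul_tmul']
    simp [smul_eq_mul]
  | add x y hx hy => rw [smul_add, map_add, map_add, smul_add, hx, hy]

/-- the linear map `M^r → Sym(I) ⊗ M`, `c ↦ ∑ ι(fᵢ) ⊗ cᵢ`. -/
private def GG (hf : ∀ i, f i ∈ I) : (Fin r → M) →ₗ[R] (SymmetricAlg R ↥I ⊗[R] M) :=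
  ∑ i, (TensorProduct.mk R (SymmetricAlg R ↥I) M (symmIota R ↥I (fI R f I hf i))) ∘ₗ
    LinearMap.proj i

private lemma GG_apply (hf : ∀ i, f i ∈ I) (c : Fin r → M) :
    GG R M f I hf c = ∑ i, symmIota R ↥I (fI R f I hf i) ⊗ₜ[R] c i := by
  simp [GG, LinearMap.sum_apply]

private lemma GG_syzImage (hf : ∀ i, f i ∈ I) :
    ∀ c ∈ syzImage R M r f, GG R M f I hf c = 0 := by
  intro c hc
  refine Submodule.span_induction ?_ ?_ ?_ ?_ hc
  · rintro v ⟨z, hz, m, rfl⟩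
    rw [GG_apply]
    have h1 : ∀ i, symmIota R ↥I (fI R f I hf i) ⊗ₜ[R] (z i • m)
        = (z i • symmIota R ↥I (fI R f I hf i)) ⊗ₜ[R] m := by
      intro i
      rw [TensorProduct.tmul_smul, TensorProduct.smul_tmul']
    calc (∑ i, symmIota R ↥I (fI R f I hf i) ⊗ₜ[R] (z i • m))
        = ∑ i, (z i • symmIota R ↥I (fI R f I hf i)) ⊗ₜ[R] m := by
          exact Finset.sum_congr rfl fun i _ => h1 i
      _ = (∑ i, z i • symmIota R ↥I (fI R f I hf i)) ⊗ₜ[R] m := by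
          rw [TensorProduct.sum_tmul]
      _ = (symmIota R ↥I (piMap R f I hf z)) ⊗ₜ[R] m := by
          rw [piMap_apply, map_sum]
          simp
      _ = 0 := by
          rw [(piMap_eq_zero_iff R f I hf z).2 hz, map_zero, TensorProduct.zero_tmul]
  · exact map_zero _
  · intro x y _ _ hx hy; rw [map_add, hx, hy, add_zero]
  · intro a x _ hx; rw [map_smul, hx, smul_zero]

private lemma rT_AA_ker (hf : ∀ i, f i ∈ I) :
    Submodule.restrictScalars R (LMsmall R M r f)
      ≤ LinearMap.ker (LinearMap.rTensor M (AA R f I hf).toLinearMap) := by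
  intro x hx
  rw [LinearMap.mem_ker]
  simp only [Submodule.restrictScalars_mem] at hx
  refine Submodule.span_induction ?_ ?_ ?_ ?_ hx
  · rintro x ⟨c, hc, rfl⟩
    have h1 : LinearMap.rTensor M (AA R f I hf).toLinearMap (linForm R M r c)
        = GG R M f I hf c := by
      rw [linForm, map_sum, GG_apply]
      congr 1
      funext i
      rw [LinearMap.rTensor_tmul]
      simp [AA]
    rw [h1]
    exact GG_syzImage R M f I hf c hc
  · simp
  · intro x y _ _ hx hy; rw [map_add, hx, hy, add_zero]
  · intro a x _ hx; rw [rT_AA_smul, hx, smul_zero]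

/-- the inverse-ish map `(S⊗M)/𝔏M → Sym(I) ⊗ M`. -/
private def chi (hf : ∀ i, f i ∈ I) :
    ((MT R M r) ⧸ (Submodule.restrictScalars R (LMsmall R M r f))) →ₗ[R]
      (SymmetricAlg R ↥I ⊗[R] M) :=
  Submodule.liftQ _ (LinearMap.rTensor M (AA R f I hf).toLinearMap) (rT_AA_ker R M f I hf)

private lemma chi_psm (hf : ∀ i, f i ∈ I) (x : (SS R r ⧸ JJ R f) ⊗[R] M) :
    chi R M f I hf (psm R M f x) = LinearMap.rTensor M (PsiP R f I hf).toLinearMap x := by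
  induction x using TensorProduct.induction_on with
  | zero => simp
  | tmul s m =>
    obtain ⟨p, rfl⟩ := Ideal.Quotient.mk_surjective (I := JJ R f) s
    rw [psm_tmul, chi, Submodule.liftQ_apply, LinearMap.rTensor_tmul, LinearMap.rTensor_tmul]
    rw [AlgHom.toLinearMap_apply, AlgHom.toLinearMap_apply, PsiP_mk]
  | add x y hx hy => rw [map_add, map_add, map_add, hx, hy]

private lemma chi_psi0 (hf : ∀ i, f i ∈ I) (hI : I = Ideal.span (Set.range f))
    (w : SymmetricAlg R ↥I ⊗[R] M) :
    chi R M f I hf (psi0 R M f I hf hI w) = w := by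
  rw [psi0, LinearMap.comp_apply, chi_psm]
  have h1 : LinearMap.rTensor M (PsiP R f I hf).toLinearMap
        (LinearMap.rTensor M (PhiS R f I hf hI).toLinearMap w)
      = LinearMap.rTensor M ((PsiP R f I hf).comp (PhiS R f I hf hI)).toLinearMap w := by
    rw [AlgHom.comp_toLinearMap, LinearMap.rTensor_comp]
    rfl
  rw [h1, PsiP_PhiS]
  have h2 : (AlgHom.id R (SymmetricAlg R ↥I)).toLinearMap = LinearMap.id := rfl
  rw [h2, LinearMap.rTensor_id]
  rfl

end Aux5
section Aux6
variable (R : Type) [CommRing R] (M : Type) [AddCommGroup M] [Module R M]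
  {r : ℕ} (f : Fin r → R)

/-- extraction of the degree-one coefficients. -/
private def P1 : MT R M r →ₗ[R] (Fin r → M) :=
  LinearMap.pi fun j => (TensorProduct.lid R M).toLinearMap ∘ₗ
    LinearMap.rTensor M (MvPolynomial.lcoeff (R := R) (Finsupp.single j 1))

private lemma P1_tmul (s : SS R r) (m : M) (j : Fin r) :
    P1 R M (s ⊗ₜ[R] m) j = MvPolynomial.coeff (Finsupp.single j 1) s • m := by
  simp [P1, TensorProduct.lid_tmul, MvPolynomial.lcoeff]

private lemma P1_smul_linForm (p : SS R r) (c : Fin r → M) :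
    P1 R M (p • linForm R M r c) = MvPolynomial.constantCoeff p • c := by
  have h1 : p • linForm R M r c = ∑ i, (p * MvPolynomial.X i) ⊗ₜ[R] c i := by
    rw [linForm, Finset.smul_sum]
    exact Finset.sum_congr rfl fun i _ => by rw [TensorProduct.smul_tmul', smul_eq_mul]
  funext j
  rw [h1, map_sum]
  have h2 : ∀ i, P1 R M ((p * MvPolynomial.X i) ⊗ₜ[R] c i) j
      = MvPolynomial.coeff (Finsupp.single j 1) (p * MvPolynomial.X i) • c i :=
    fun i => P1_tmul R M _ _ j
  rw [Finset.sum_apply]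
  calc (∑ i, P1 R M ((p * MvPolynomial.X i) ⊗ₜ[R] c i) j)
      = ∑ i, MvPolynomial.coeff (Finsupp.single j 1) (p * MvPolynomial.X i) • c i :=
        Finset.sum_congr rfl fun i _ => h2 i
    _ = MvPolynomial.constantCoeff p • c j := by
        rw [Finset.sum_eq_single j]
        · rw [MvPolynomial.coeff_mul_X']
          simp [Finsupp.support_single_ne_zero j one_ne_zero,
            MvPolynomial.constantCoeff_eq]
        · intro i _ hij
          rw [MvPolynomial.coeff_mul_X']
          rw [Finsupp.support_single_ne_zero j one_ne_zero,
            if_neg (by simp [hij]), zero_smul]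
        · intro h; exact absurd (Finset.mem_univ j) h
    _ = (MvPolynomial.constantCoeff p • c) j := rfl

private lemma P1_linForm (c : Fin r → M) : P1 R M (linForm R M r c) = c := by
  have := P1_smul_linForm R M (1 : SS R r) c
  rw [one_smul, map_one, one_smul] at this
  exact this

private lemma P1_LMsmall : ∀ x ∈ LMsmall R M r f, P1 R M x ∈ syzImage R M r f := by
  have key : ∀ x ∈ LMsmall R M r f, ∀ p : SS R r,
      P1 R M (p • x) ∈ syzImage R M r f := by
    intro x hx
    refine Submodule.span_induction ?_ ?_ ?_ ?_ hx
    · rintro x ⟨c, hc, rfl⟩ p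
      rw [P1_smul_linForm]
      exact Submodule.smul_mem _ _ hc
    · intro p; rw [smul_zero, map_zero]; exact Submodule.zero_mem _
    · intro x y _ _ hx hy p
      rw [smul_add, map_add]; exact Submodule.add_mem _ (hx p) (hy p)
    · intro a x _ hx p
      rw [smul_smul]; exact hx (p * a)
  intro x hx
  have := key x hx 1
  rwa [one_smul] at this

end Aux6

/-- **Proposition 2.6.** Let `R` be a Noetherian ring, `I = (f_1, …, f_r)` an ideal and
`M` a finitely generated `R`-module.  There is a natural epimorphism
`φ : Sym_R(I) ⊗_R M ↠ H_0(𝒵_•(f; M)) = M[T]/𝔏_M` (which for `M = R` is the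
isomorphism `H_0(𝒵_•(f; R)) ≅ Sym_R(I)`), and `φ` is an isomorphism if and only if
`Tor_1^R(R/I, M) = 0` (expressed here as `Z_1(f; M) = im (Z_1(f; R) ⊗ M)`). -/
theorem sym_tensor_to_H0
    (R : Type) [CommRing R] [IsNoetherianRing R]
    (M : Type) [AddCommGroup M] [Module R M] [Module.Finite R M]
    {r : ℕ} (f : Fin r → R) (I : Ideal R) (hI : I = Ideal.span (Set.range f)) :
    (∃ ψ : ((SymmetricAlg R ↥I) ⊗[R] M) →ₗ[R]
        ((MT R M r) ⧸ (Submodule.restrictScalars R (LMfull R M r f))),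
      Function.Surjective ψ ∧
      (Function.Bijective ψ ↔ syzMod R M r f ≤ syzImage R M r f)) ∧
    Nonempty ((SymmetricAlg R ↥I) ≃ₗ[R]
      ((MT R R r) ⧸ (Submodule.restrictScalars R (LMfull R R r f)))) := by
  have hf : ∀ i, f i ∈ I := fun i => hI ▸ Ideal.subset_span ⟨i, rfl⟩
  refine ⟨?_, ⟨part2equiv R f I hf hI⟩⟩
  have hle : Submodule.restrictScalars R (LMsmall R M r f) ≤
      Submodule.comap LinearMap.id (Submodule.restrictScalars R (LMfull R M r f)) := by
    intro x hx
    simpa using LMsmall_le_LMfull R M f (by simpa using hx)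
  set mq := Submodule.mapQ (Submodule.restrictScalars R (LMsmall R M r f))
    (Submodule.restrictScalars R (LMfull R M r f)) LinearMap.id hle with hmq
  set ψ := mq ∘ₗ psi0 R M f I hf hI with hψ
  have hmq_surj : Function.Surjective mq := by
    intro y
    obtain ⟨x, rfl⟩ := Submodule.Quotient.mk_surjective _ y
    exact ⟨Submodule.Quotient.mk x, by rw [hmq, Submodule.mapQ_apply]; rfl⟩
  have hsurj : Function.Surjective ψ := by
    have := Function.Surjective.comp hmq_surj (psi0_surjective R M f I hf hI)
    exact fun y => this y
  refine ⟨ψ, hsurj, ?_, ?_⟩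
  · -- bijective → syzMod ≤ syzImage
    intro hbij c hc
    have h1 : linForm R M r c ∈ LMfull R M r f := Submodule.subset_span ⟨c, hc, rfl⟩
    obtain ⟨w, hw⟩ := psi0_surjective R M f I hf hI
      (Submodule.Quotient.mk (linForm R M r c))
    have h2 : ψ w = 0 := by
      rw [hψ, LinearMap.comp_apply, hw, hmq, Submodule.mapQ_apply, LinearMap.id_apply,
        Submodule.Quotient.mk_eq_zero]
      simpa using h1
    have h3 : w = 0 := hbij.injective (by rw [h2, map_zero])
    rw [h3, map_zero] at hw
    have h4 : linForm R M r c ∈ LMsmall R M r f := by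
      have := (Submodule.Quotient.mk_eq_zero _).1 hw.symm
      simpa using this
    have := P1_LMsmall R M f _ h4
    rwa [P1_linForm] at this
  · -- syzMod ≤ syzImage → bijective
    intro hle2
    have hfull_le : LMfull R M r f ≤ LMsmall R M r f := by
      rw [LMfull, Submodule.span_le]
      rintro x ⟨c, hc, rfl⟩
      exact Submodule.subset_span ⟨c, hle2 hc, rfl⟩
    have hinj : Function.Injective ψ := by
      intro a b hab
      have h0 : ψ (a - b) = 0 := by rw [map_sub, hab, sub_self]
      have : a - b = 0 := by
        obtain ⟨y, hy⟩ := Submodule.Quotient.mk_surjective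
          (Submodule.restrictScalars R (LMsmall R M r f)) (psi0 R M f I hf hI (a - b))
        have h5 : ψ (a - b) = Submodule.Quotient.mk y := by
          rw [hψ, LinearMap.comp_apply, ← hy, hmq, Submodule.mapQ_apply]; rfl
        rw [h0] at h5
        have h6 : y ∈ LMfull R M r f := by
          have := (Submodule.Quotient.mk_eq_zero _).1 h5.symm
          simpa using this
        have h7 : psi0 R M f I hf hI (a - b) = 0 := by
          rw [← hy, Submodule.Quotient.mk_eq_zero]
          simpa using hfull_le h6
        have := chi_psi0 R M f I hf hI (a - b)
        rw [h7, map_zero] at this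
        exact this.symm
      exact sub_eq_zero.1 this
    exact ⟨hinj, hsurj⟩
end
end

section
/- Let M be a module over a ring R and let N be a quotient of the graded module M[T_1,...,T_r] (each T_i an indeterminate of degree 1) by a graded submodule. Then for all k ≥ 1, ann_R(N_k) ⊆ ann_R(N_{k+1}), where N_k denotes the degree-k graded component of N and ann_R denotes the annihilator in R. -/
/-!
Formalization of statements from:
"Cohen-Macaulayness and canonical module of residual intersections"
(Chardin, Naeliton, Tran).
-/

noncomputable section
open RingTheory.Sequence
open scoped TensorProduct

/-- **Lemma 3.4.** Let `M` be a module over `R` and let `N` be the quotient of the graded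
module `M[T_1, …, T_r]` by a graded submodule `U`.  Then for all `k ≥ 1`,
`ann_R(N_k) ⊆ ann_R(N_{k+1})`. -/
theorem graded_quotient_annihilator_mono
    (R : Type) [CommRing R] (M : Type) [AddCommGroup M] [Module R M] (r : ℕ)
    (U : Submodule (SS R r) (MT R M r))
    (hU : Submodule.restrictScalars R U =
      ⨆ k : ℕ, (Submodule.restrictScalars R U ⊓ mtGrade R M r k))
    (k : ℕ) (hk : 1 ≤ k) (a : R)
    (ha : ∀ y ∈ Submodule.map (U.mkQ.restrictScalars R) (mtGrade R M r k), a • y = 0) :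
    ∀ y ∈ Submodule.map (U.mkQ.restrictScalars R) (mtGrade R M r (k + 1)), a • y = 0 := by
  -- `a` sends degree-`k` elements into `U`
  have hU2 : ∀ z ∈ mtGrade R M r k, a • z ∈ Submodule.restrictScalars R U := by
    intro z hz
    have h1 : (U.mkQ.restrictScalars R) (a • z) = 0 := by
      rw [map_smul]; exact ha _ (Submodule.mem_map.mpr ⟨z, hz, rfl⟩)
    rwa [LinearMap.restrictScalars_apply, Submodule.mkQ_apply,
      Submodule.Quotient.mk_eq_zero] at h1
  -- key: for homogeneous `p` of degree `k+1`, `a • (p ⊗ m) ∈ U`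
  have key : ∀ p : MvPolynomial (Fin r) R, p.IsHomogeneous (k + 1) → ∀ m : M,
      a • (p ⊗ₜ[R] m : MT R M r) ∈ Submodule.restrictScalars R U := by
    intro p hp m
    rw [← p.support_sum_monomial_coeff, TensorProduct.sum_tmul, Finset.smul_sum]
    apply Submodule.sum_mem
    intro d hd
    have hdeg : d.degree = k + 1 := by
      rw [Finsupp.degree_eq_weight_one]; exact hp (MvPolynomial.mem_support_iff.mp hd)
    have hdne : d ≠ 0 := by
      intro h; rw [h] at hdeg; simp at hdeg
    obtain ⟨i, hi⟩ : ∃ i, d i ≠ 0 := by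
      by_contra h
      push_neg at h
      exact hdne (Finsupp.ext fun j => h j)
    set d' : Fin r →₀ ℕ := d - Finsupp.single i 1 with hd'def
    have hdd : d' + Finsupp.single i 1 = d := by
      ext j
      by_cases hji : j = i
      · subst hji
        simp [hd'def, Nat.sub_add_cancel (Nat.one_le_iff_ne_zero.mpr hi)]
      · simp [hd'def, Finsupp.single_apply, Ne.symm hji]
    have hdeg' : d'.degree = k := by
      have : (d' + Finsupp.single i 1).degree = d'.degree + 1 := by
        rw [Finsupp.degree_eq_weight_one, map_add]
        simp [Finsupp.degree_eq_weight_one, Finsupp.weight_apply,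
          Finsupp.sum_single_index]
      rw [hdd, hdeg] at this
      omega
    set c : R := MvPolynomial.coeff d p
    have hq : (MvPolynomial.monomial d' c).IsHomogeneous k :=
      MvPolynomial.isHomogeneous_monomial _ hdeg'
    have hmem : ((MvPolynomial.monomial d' c : SS R r) ⊗ₜ[R] m : MT R M r) ∈ mtGrade R M r k := by
      refine LinearMap.mem_range.mpr ⟨(⟨_, (MvPolynomial.mem_homogeneousSubmodule _ _).mpr hq⟩ :
        MvPolynomial.homogeneousSubmodule (Fin r) R k) ⊗ₜ[R] m, ?_⟩
      simp [LinearMap.rTensor_tmul]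
    have hmono : (MvPolynomial.monomial d c : SS R r) =
        MvPolynomial.X i * MvPolynomial.monomial d' c := by
      rw [← hdd, MvPolynomial.monomial_add_single, pow_one, mul_comm]
    rw [hmono]
    have heq : a • ((MvPolynomial.X i * MvPolynomial.monomial d' c : SS R r) ⊗ₜ[R] m : MT R M r)
        = (MvPolynomial.X i : SS R r) • (a • ((MvPolynomial.monomial d' c : SS R r) ⊗ₜ[R] m)) := by
      rw [show (MvPolynomial.X i * MvPolynomial.monomial d' c : SS R r)
            = (MvPolynomial.X i : SS R r) • (MvPolynomial.monomial d' c : SS R r) from rfl]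
      simp only [← TensorProduct.tmul_smul]
      rw [TensorProduct.smul_tmul']
    rw [heq]
    exact Submodule.smul_mem U _ (hU2 _ hmem)
  -- conclude
  rintro y ⟨x, hx, rfl⟩
  rw [← map_smul]
  obtain ⟨t, rfl⟩ := hx
  have : a • (LinearMap.rTensor M (MvPolynomial.homogeneousSubmodule (Fin r) R (k+1)).subtype) t
      ∈ Submodule.restrictScalars R U := by
    induction t using TensorProduct.induction_on with
    | zero => simp
    | tmul p m =>
      rw [LinearMap.rTensor_tmul]
      exact key p.1 ((MvPolynomial.mem_homogeneousSubmodule _ _).mp p.2) m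
    | add x y hx hy =>
      rw [map_add, smul_add]
      exact Submodule.add_mem _ hx hy
  rw [LinearMap.restrictScalars_apply, Submodule.mkQ_apply, Submodule.Quotient.mk_eq_zero]
  exact this

end
end

section
/- Let R be a Noetherian ring, I = (f_1,...,f_r) an ideal, a = (a_1,...,a_s) ⊆ I with a_i = Σ_j c_{ji} f_j, and M a finitely generated R-module. Then for all k ≥ 1 there exists a natural epimorphism ψ: Sym_R^k(I/a) ⊗_R M ↠ M[T_1,...,T_r]_{[k]}/(LM + L' + γM)_{[k]}, and ψ is an isomorphism if Tor_1^R(R/I, M) = 0. -/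
/-!
Formalization of statements from:
"Cohen-Macaulayness and canonical module of residual intersections"
(Chardin, Naeliton, Tran).
-/

noncomputable section
open RingTheory.Sequence
open scoped TensorProduct

namespace ResidualAux
open MvPolynomial

variable {R : Type} [CommRing R]

theorem prod_pow_mem {A : Type} [CommRing A] [Algebra R A] (P : Submodule R A)
    {ι : Type} (t : Finset ι) (g : ι → A) (hg : ∀ j, g j ∈ P) (α : ι → ℕ) :
    (∏ j ∈ t, g j ^ α j) ∈ P ^ (∑ j ∈ t, α j) := by
  classical
  induction t using Finset.cons_induction with
  | empty =>
      simpa using (Submodule.one_le (P := (1 : Submodule R A))).mp le_rfl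
  | cons a t ha ih =>
      rw [Finset.prod_cons, Finset.sum_cons, pow_add]
      exact Submodule.mul_mem_mul (Submodule.pow_mem_pow _ (hg a) _) ih

noncomputable def symLift {N A : Type} [AddCommGroup N] [Module R N] [CommRing A] [Algebra R A]
    (φ : N →ₗ[R] A) : SymmetricAlg R N →ₐ[R] A :=
  RingQuot.liftAlgHom R ⟨TensorAlgebra.lift R φ, by
    rintro x y ⟨a, b⟩
    simp [mul_comm]⟩

@[simp] theorem symLift_iota {N A : Type} [AddCommGroup N] [Module R N] [CommRing A]
    [Algebra R A] (φ : N →ₗ[R] A) (ν : N) : symLift φ (symmIota R N ν) = φ ν := by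
  change (symLift φ) ((RingQuot.mkAlgHom R (SymmRel R N)) (TensorAlgebra.ι R ν)) = φ ν
  rw [symLift]
  exact (RingQuot.liftAlgHom_mkAlgHom_apply _ _ _ _).trans (TensorAlgebra.lift_ι_apply _ _)

variable (R) in
noncomputable def piF {r : ℕ} (f : Fin r → R) : (Fin r → R) →ₗ[R] R :=
  ∑ i, f i • (LinearMap.proj i)

theorem piF_apply {r : ℕ} (f : Fin r → R) (b : Fin r → R) :
    piF R f b = ∑ i, f i * b i := by
  simp [piF]

theorem syzMod_eq_ker {r : ℕ} (f : Fin r → R) :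
    syzMod R R r f = LinearMap.ker (piF R f) := rfl

variable (R) in
noncomputable def linSl {r : ℕ} : (Fin r → R) →ₗ[R] SS R r :=
  ∑ j, LinearMap.smulRight (LinearMap.proj j) (MvPolynomial.X j)

theorem linSl_apply {r : ℕ} (b : Fin r → R) :
    linSl R b = ∑ j, b j • (MvPolynomial.X j : SS R r) := by
  simp [linSl]

end ResidualAux
namespace ResidualAux
open MvPolynomial

variable {R : Type} [CommRing R]

variable (R) in
noncomputable def Jet {r s : ℕ} (f : Fin r → R) (cc : Fin s → Fin r → R) : Ideal (SS R r) :=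
  Ideal.span ({x | ∃ b ∈ syzMod R R r f, x = linSl R b} ∪
    {x | ∃ i : Fin s, x = linSl R (cc i)})

variable (R) in
noncomputable def fbar {r : ℕ} (f : Fin r → R) (I 𝔞 : Ideal R) (hfI : ∀ j, f j ∈ I) :
    Fin r → IdealQuot R I 𝔞 := fun j =>
  Submodule.Quotient.mk (⟨f j, hfI j⟩ : I)

variable (R) in
noncomputable def symProd {r : ℕ} (f : Fin r → R) (I 𝔞 : Ideal R) (hfI : ∀ j, f j ∈ I)
    (α : Fin r →₀ ℕ) : SymmetricAlg R (IdealQuot R I 𝔞) :=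
  ∏ j, symmIota R (IdealQuot R I 𝔞) (fbar R f I 𝔞 hfI j) ^ α j

theorem symProd_mem {r : ℕ} (f : Fin r → R) (I 𝔞 : Ideal R) (hfI : ∀ j, f j ∈ I)
    (α : Fin r →₀ ℕ) :
    symProd R f I 𝔞 hfI α ∈ symPow R (IdealQuot R I 𝔞) (∑ j, α j) :=
  prod_pow_mem _ _ _ (fun j => LinearMap.mem_range_self _ _) _

theorem symProd_zero {r : ℕ} (f : Fin r → R) (I 𝔞 : Ideal R) (hfI : ∀ j, f j ∈ I) :
    symProd R f I 𝔞 hfI 0 = 1 := by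
  simp [symProd]

theorem symProd_single_add {r : ℕ} (f : Fin r → R) (I 𝔞 : Ideal R) (hfI : ∀ j, f j ∈ I)
    (j0 : Fin r) (α : Fin r →₀ ℕ) :
    symProd R f I 𝔞 hfI (Finsupp.single j0 1 + α)
      = symmIota R (IdealQuot R I 𝔞) (fbar R f I 𝔞 hfI j0) * symProd R f I 𝔞 hfI α := by
  classical
  unfold symProd
  simp only [Finsupp.add_apply, pow_add]
  rw [Finset.prod_mul_distrib]
  congr 1
  simp [Finsupp.single_apply, pow_ite]

theorem sum_single_add {r : ℕ} (j0 : Fin r) (α : Fin r →₀ ℕ) :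
    (∑ j, (Finsupp.single j0 1 + α : Fin r →₀ ℕ) j) = (∑ j, α j) + 1 := by
  classical
  simp only [Finsupp.add_apply]
  rw [Finset.sum_add_distrib]
  have h1 : (∑ j, (Finsupp.single j0 1 : Fin r →₀ ℕ) j) = 1 := by
    simp [Finsupp.single_apply]
  rw [h1, add_comm]

theorem sum_eq_zero_iff_finsupp {r : ℕ} (α : Fin r →₀ ℕ) :
    (∑ j, α j) = 0 ↔ α = 0 := by
  classical
  rw [Finset.sum_eq_zero_iff]
  constructor
  · intro h; ext j; exact h j (Finset.mem_univ j)
  · intro h j _; simp [h]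

end ResidualAux
namespace ResidualAux
open MvPolynomial

variable {R : Type} [CommRing R]

theorem sum_smul_fbar {r : ℕ} (f : Fin r → R) (I 𝔞 : Ideal R) (hfI : ∀ j, f j ∈ I)
    (b : Fin r → R) (hbI : piF R f b ∈ I) :
    (∑ j, b j • fbar R f I 𝔞 hfI j)
      = Submodule.Quotient.mk (⟨piF R f b, hbI⟩ : I) := by
  have h1 : (∑ j, b j • fbar R f I 𝔞 hfI j)
      = (Submodule.comap I.subtype 𝔞).mkQ (∑ j, b j • (⟨f j, hfI j⟩ : I)) := by
    rw [map_sum]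
    simp only [map_smul]
    rfl
  have h2 : (∑ j, b j • (⟨f j, hfI j⟩ : I)) = (⟨piF R f b, hbI⟩ : I) := by
    apply Subtype.ext
    simp [piF_apply, mul_comm]
  rw [h1, h2, Submodule.mkQ_apply]

theorem sum_smul_iota_fbar {r : ℕ} (f : Fin r → R) (I 𝔞 : Ideal R) (hfI : ∀ j, f j ∈ I)
    (b : Fin r → R) (hbI : piF R f b ∈ I) :
    (∑ j, b j • symmIota R (IdealQuot R I 𝔞) (fbar R f I 𝔞 hfI j))
      = symmIota R (IdealQuot R I 𝔞) (Submodule.Quotient.mk (⟨piF R f b, hbI⟩ : I)) := by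
  rw [← sum_smul_fbar f I 𝔞 hfI b hbI, map_sum]
  simp only [map_smul]

noncomputable def symPowElt {r : ℕ} (f : Fin r → R) (I 𝔞 : Ideal R) (hfI : ∀ j, f j ∈ I)
    (n : ℕ) (α : Fin r →₀ ℕ) (h : (∑ j, α j) = n) : ↥(symPow R (IdealQuot R I 𝔞) n) :=
  ⟨symProd R f I 𝔞 hfI α, h ▸ symProd_mem f I 𝔞 hfI α⟩

variable (R) in
noncomputable def Fmap {r : ℕ} (f : Fin r → R) (I 𝔞 : Ideal R) (hfI : ∀ j, f j ∈ I) (n : ℕ) :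
    SS R r →ₗ[R] ↥(symPow R (IdealQuot R I 𝔞) n) :=
  (MvPolynomial.basisMonomials (Fin r) R).constr ℕ fun α =>
    if h : (∑ j, α j) = n then symPowElt f I 𝔞 hfI n α h else 0

theorem Fmap_monomial {r : ℕ} (f : Fin r → R) (I 𝔞 : Ideal R) (hfI : ∀ j, f j ∈ I) (n : ℕ)
    (α : Fin r →₀ ℕ) (c : R) :
    Fmap R f I 𝔞 hfI n (monomial α c)
      = c • (if h : (∑ j, α j) = n then symPowElt f I 𝔞 hfI n α h else 0) := by
  have hb : (monomial α c : SS R r) = c • ((basisMonomials (Fin r) R) α) := by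
    rw [coe_basisMonomials]
    rw [smul_monomial, smul_eq_mul, mul_one]
  rw [hb, map_smul, Fmap, Module.Basis.constr_basis]

theorem Fmap_apply_zero {r : ℕ} (f : Fin r → R) (I 𝔞 : Ideal R) (hfI : ∀ j, f j ∈ I)
    (p : SS R r) :
    Fmap R f I 𝔞 hfI 0 p
      = (constantCoeff p) • symPowElt f I 𝔞 hfI 0 0 (by simp) := by
  induction p using MvPolynomial.induction_on' with
  | monomial α c =>
      rw [Fmap_monomial, constantCoeff_monomial]
      by_cases hα : α = 0
      · subst hα
        rw [dif_pos (by simp)]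
        rfl
      · rw [dif_neg (by rw [sum_eq_zero_iff_finsupp]; exact hα), if_neg hα, zero_smul, smul_zero]
  | add p q hp hq =>
      rw [map_add, map_add, hp, hq, add_smul]

theorem Fmap_linS_mul {r : ℕ} (f : Fin r → R) (I 𝔞 : Ideal R) (hfI : ∀ j, f j ∈ I)
    (b : Fin r → R) (hbI : piF R f b ∈ I) (n : ℕ) (p : SS R r) :
    ((Fmap R f I 𝔞 hfI (n+1) (linSl R b * p) : ↥(symPow R (IdealQuot R I 𝔞) (n+1))) :
        SymmetricAlg R (IdealQuot R I 𝔞))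
      = symmIota R (IdealQuot R I 𝔞) (Submodule.Quotient.mk (⟨piF R f b, hbI⟩ : I))
          * ((Fmap R f I 𝔞 hfI n p : ↥(symPow R (IdealQuot R I 𝔞) n)) :
              SymmetricAlg R (IdealQuot R I 𝔞)) := by
  classical
  induction p using MvPolynomial.induction_on' with
  | monomial α c =>
      have hexp : linSl R b * monomial α c
          = ∑ j, b j • (monomial (Finsupp.single j 1 + α) c : SS R r) := by
        rw [linSl_apply, Finset.sum_mul]
        refine Finset.sum_congr rfl fun j _ => ?_
        rw [smul_mul_assoc, show (X j : SS R r) = monomial (Finsupp.single j 1) 1 from rfl,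
          monomial_mul, one_mul]
      rw [hexp, map_sum]
      by_cases h : (∑ j, α j) = n
      · have hji : ∀ j : Fin r, Fmap R f I 𝔞 hfI (n+1) (monomial (Finsupp.single j 1 + α) c)
            = c • symPowElt f I 𝔞 hfI (n+1) (Finsupp.single j 1 + α)
                (by rw [sum_single_add, h]) := by
          intro j
          rw [Fmap_monomial, dif_pos]
        simp only [map_smul, hji]
        rw [Fmap_monomial, dif_pos h]
        simp only [AddSubmonoidClass.coe_finset_sum, SetLike.val_smul, symPowElt,
          symProd_single_add]
        rw [mul_smul_comm, ← sum_smul_iota_fbar f I 𝔞 hfI b hbI]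
        erw [Finset.sum_mul]
        rw [Finset.smul_sum]
        refine Finset.sum_congr rfl fun j _ => ?_
        rw [smul_mul_assoc, smul_comm (b j) c]
      · have hji : ∀ j : Fin r, Fmap R f I 𝔞 hfI (n+1) (monomial (Finsupp.single j 1 + α) c)
            = 0 := by
          intro j
          rw [Fmap_monomial, dif_neg, smul_zero]
          rw [sum_single_add]
          omega
        simp only [map_smul, hji]
        rw [Fmap_monomial, dif_neg h]
        simp
  | add p q hp hq =>
      rw [mul_add, map_add, map_add]
      push_cast
      rw [hp, hq, mul_add]

end ResidualAux
namespace ResidualAux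
open MvPolynomial

variable {R : Type} [CommRing R]

theorem constantCoeff_linSl {r : ℕ} (b : Fin r → R) :
    constantCoeff (linSl R b) = 0 := by
  simp [linSl_apply, smul_eq_C_mul]

theorem Fmap_mul_linS_zero {r : ℕ} (f : Fin r → R) (I 𝔞 : Ideal R) (hfI : ∀ j, f j ∈ I)
    (b : Fin r → R) (hbI : piF R f b ∈ I)
    (hb0 : (Submodule.Quotient.mk (⟨piF R f b, hbI⟩ : I) : IdealQuot R I 𝔞) = 0)
    (n : ℕ) (q : SS R r) : Fmap R f I 𝔞 hfI n (q * linSl R b) = 0 := by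
  cases n with
  | zero =>
      rw [Fmap_apply_zero, map_mul, constantCoeff_linSl, mul_zero, zero_smul]
  | succ n =>
      rw [mul_comm q]
      have hv := Fmap_linS_mul f I 𝔞 hfI b hbI n q
      have h0 : symmIota R (IdealQuot R I 𝔞) (Submodule.Quotient.mk (⟨piF R f b, hbI⟩ : I)) = 0 := by
        rw [hb0]; exact map_zero _
      rw [h0, zero_mul] at hv
      exact Subtype.ext hv

theorem Fmap_jet {r s : ℕ} (f : Fin r → R) (cc : Fin s → Fin r → R) (I 𝔞 : Ideal R)
    (hfI : ∀ j, f j ∈ I) (hcc𝔞 : ∀ i, piF R f (cc i) ∈ 𝔞) (h𝔞I : 𝔞 ≤ I) (n : ℕ) :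
    ∀ p ∈ Jet R f cc, Fmap R f I 𝔞 hfI n p = 0 := by
  intro p hp
  have key : ∀ q : SS R r, Fmap R f I 𝔞 hfI n (q * p) = 0 := by
    induction hp using Submodule.span_induction with
    | mem x hx =>
        rcases hx with ⟨b, hb, rfl⟩ | ⟨i, rfl⟩
        · have hb0 : piF R f b = 0 := by
            rw [syzMod_eq_ker] at hb
            exact LinearMap.mem_ker.mp hb
          have hba : piF R f b ∈ 𝔞 := hb0 ▸ zero_mem 𝔞
          exact fun q => Fmap_mul_linS_zero f I 𝔞 hfI b (h𝔞I hba)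
            ((Submodule.Quotient.mk_eq_zero _).mpr hba) n q
        · have hba : piF R f (cc i) ∈ 𝔞 := hcc𝔞 i
          exact fun q => Fmap_mul_linS_zero f I 𝔞 hfI (cc i) (h𝔞I hba)
            ((Submodule.Quotient.mk_eq_zero _).mpr hba) n q
    | zero => intro q; rw [mul_zero, map_zero]
    | add x y hx hy ihx ihy => intro q; rw [mul_add, map_add, ihx q, ihy q, add_zero]
    | smul a x hx ih => intro q; rw [smul_eq_mul, ← mul_assoc]; exact ih (q * a)
  simpa using key 1

theorem linSl_tmul (M : Type) [AddCommGroup M] [Module R M] {r : ℕ} (b : Fin r → R) (m : M) :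
    (linSl R b) ⊗ₜ[R] m = linForm R M r (fun j => b j • m) := by
  rw [linSl_apply, TensorProduct.sum_tmul]
  unfold linForm
  exact Finset.sum_congr rfl fun j _ => (TensorProduct.smul_tmul _ _ _)

theorem smul_linForm_eq (M : Type) [AddCommGroup M] [Module R M] {r : ℕ}
    (b : Fin r → R) (m : M) (q : SS R r) :
    q • linForm R M r (fun j => b j • m) = (q * linSl R b) ⊗ₜ[R] m := by
  unfold linForm
  rw [Finset.smul_sum, linSl_apply, Finset.mul_sum, TensorProduct.sum_tmul]
  refine Finset.sum_congr rfl fun j _ => ?_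
  rw [TensorProduct.smul_tmul', smul_eq_mul, mul_smul_comm, TensorProduct.smul_tmul]

end ResidualAux

open ResidualAux MvPolynomial

set_option maxHeartbeats 2000000

/-- **Proposition 3.3.** Let `R` be a Noetherian ring, `𝔞 = (a_1, …, a_s) ⊆ I = (f_1, …, f_r)`
with `a_i = ∑_j c_{ij} f_j`, and `M` a finitely generated `R`-module.  For every `k ≥ 1`
there is a natural epimorphism
`ψ : Sym_R^k(I/𝔞) ⊗_R M ↠ M[T]_{[k]}/(𝔏M + 𝔏' + γM)_{[k]}` (the zeroth homology of the
`k`-th residual approximation complex), and `ψ` is an isomorphism if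
`Tor_1^R(R/I, M) = 0`. -/
theorem residual_approximation_H0_sym
    (R : Type) [CommRing R] [IsNoetherianRing R]
    (M : Type) [AddCommGroup M] [Module R M] [Module.Finite R M]
    {r s : ℕ} (f : Fin r → R) (I : Ideal R) (hI : I = Ideal.span (Set.range f))
    (av : Fin s → R) (𝔞 : Ideal R) (h𝔞 : 𝔞 = Ideal.span (Set.range av)) (h𝔞I : 𝔞 ≤ I)
    (cc : Fin s → Fin r → R) (hcc : ∀ i, av i = ∑ j, cc i j * f j)
    (G : Set (Fin r → M)) (hGsub : ∀ c ∈ G, c ∈ syzMod R M r f)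
    (hGgen : syzMod R M r f ≤ Submodule.span R G ⊔ syzImage R M r f)
    (k : ℕ) (hk : 1 ≤ k) :
    ∃ ψ : (↥(symPow R (IdealQuot R I 𝔞) k) ⊗[R] M) →ₗ[R]
        ↥(Submodule.map
            (Submodule.mkQ (Submodule.restrictScalars R
              (LMsmall R M r f ⊔
                Submodule.span (SS R r) {x | ∃ c ∈ G, x = linForm R M r c} ⊔
                Submodule.span (SS R r)
                  {x | ∃ (i : Fin s) (m : M), x = linForm R M r (fun j => cc i j • m)})))
            (mtGrade R M r k)),
      Function.Surjective ψ ∧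
      ((syzMod R M r f ≤ syzImage R M r f) → Function.Bijective ψ) := by
  classical
  -- basic facts about `f`, `I`, `𝔞`
  have hfI : ∀ j, f j ∈ I := fun j => hI ▸ Ideal.subset_span ⟨j, rfl⟩
  have hπI : ∀ b : Fin r → R, piF R f b ∈ I := by
    intro b
    rw [piF_apply, hI]
    exact Ideal.sum_mem _ fun i _ => Ideal.mul_mem_right _ _ (Ideal.subset_span ⟨i, rfl⟩)
  have hsurjπ : ∀ x ∈ I, ∃ b : Fin r → R, piF R f b = x := by
    intro x hx
    rw [hI] at hx
    obtain ⟨c, hc⟩ := (Submodule.mem_span_range_iff_exists_fun R).mp hx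
    exact ⟨c, by rw [piF_apply, ← hc]; exact Finset.sum_congr rfl fun i _ => mul_comm _ _⟩
  have hπcc : ∀ i, piF R f (cc i) = av i := by
    intro i
    rw [piF_apply, hcc i]
    exact Finset.sum_congr rfl fun j _ => mul_comm _ _
  have hcc𝔞 : ∀ i, piF R f (cc i) ∈ 𝔞 := by
    intro i
    rw [hπcc i, h𝔞]
    exact Ideal.subset_span ⟨i, rfl⟩
  -- the quotient ring `B = S/J`
  set J : Ideal (SS R r) := Jet R f cc with hJdef
  set Bq := (SS R r ⧸ J) with hBq
  set mkJ : SS R r →ₐ[R] Bq := Ideal.Quotient.mkₐ R J with hmkJ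
  have hmkJ_mem : ∀ p ∈ J, mkJ p = 0 := fun p hp => Ideal.Quotient.eq_zero_iff_mem.mpr hp
  have hlinSJ : ∀ b ∈ syzMod R R r f, linSl R b ∈ J :=
    fun b hb => Ideal.subset_span (Or.inl ⟨b, hb, rfl⟩)
  have hccJ : ∀ i, linSl R (cc i) ∈ J := fun i => Ideal.subset_span (Or.inr ⟨i, rfl⟩)
  -- the linear map `I → B`
  have hrange : LinearMap.range (piF R f) = I := by
    ext x
    constructor
    · rintro ⟨b, rfl⟩; exact hπI b
    · intro hx; exact hsurjπ x hx
  have hker : LinearMap.ker (piF R f) ≤ LinearMap.ker (mkJ.toLinearMap.comp (linSl R)) := by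
    intro b hb
    rw [LinearMap.mem_ker, LinearMap.comp_apply]
    exact hmkJ_mem _ (hlinSJ b (by rw [syzMod_eq_ker]; exact hb))
  set ℓI : ↥I →ₗ[R] Bq :=
    (Submodule.liftQ (LinearMap.ker (piF R f)) (mkJ.toLinearMap.comp (linSl R)) hker).comp
      (((piF R f).quotKerEquivRange.symm.toLinearMap).comp
        (LinearEquiv.ofEq I _ hrange.symm).toLinearMap) with hℓIdef
  have hℓI : ∀ (x : ↥I) (b : Fin r → R), piF R f b = ↑x → ℓI x = mkJ (linSl R b) := by
    intro x b hb
    have hx1 : (LinearEquiv.ofEq I _ hrange.symm) x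
        = ⟨piF R f b, LinearMap.mem_range_self _ b⟩ := by
      apply Subtype.ext
      simp [hb]
    rw [hℓIdef]
    simp only [LinearMap.comp_apply, LinearEquiv.coe_toLinearMap]
    rw [hx1, LinearMap.quotKerEquivRange_symm_apply_image, Submodule.mkQ_apply,
      Submodule.liftQ_apply, LinearMap.comp_apply]
    rfl
  -- `ℓbar : I/𝔞 → B`
  have h𝔞ker : Submodule.comap I.subtype 𝔞 ≤ LinearMap.ker ℓI := by
    intro x hx
    have hx' : (x : R) ∈ Ideal.span (Set.range av) := h𝔞 ▸ hx
    obtain ⟨d, hd⟩ := (Submodule.mem_span_range_iff_exists_fun R).mp hx'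
    have hb : piF R f (∑ i, d i • cc i) = ↑x := by
      rw [map_sum]
      simp only [map_smul, hπcc]
      exact hd
    rw [LinearMap.mem_ker, hℓI x _ hb, map_sum]
    apply hmkJ_mem
    exact Ideal.sum_mem _ fun i _ => by
      rw [map_smul]
      exact Submodule.smul_of_tower_mem _ _ (hccJ i)
  set ℓbar : IdealQuot R I 𝔞 →ₗ[R] Bq :=
    Submodule.liftQ (Submodule.comap I.subtype 𝔞) ℓI h𝔞ker with hℓbardef
  set Θ : SymmetricAlg R (IdealQuot R I 𝔞) →ₐ[R] Bq := symLift ℓbar with hΘdef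
  have hΘι : ∀ ν, Θ (symmIota R (IdealQuot R I 𝔞) ν) = ℓbar ν := fun ν => symLift_iota _ _
  have hΘalg : ∀ c : R, Θ (algebraMap R _ c) = mkJ (C c) := by
    intro c
    rw [AlgHom.commutes]
    rfl
  have hΘfbar : ∀ j, Θ (symmIota R (IdealQuot R I 𝔞) (fbar R f I 𝔞 hfI j)) = mkJ (X j) := by
    intro j
    rw [hΘι]
    have h1 : ℓbar (fbar R f I 𝔞 hfI j) = ℓI ⟨f j, hfI j⟩ := rfl
    have h2 : piF R f (Pi.single j 1) = f j := by
      rw [piF_apply]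
      simp [Pi.single_apply, mul_ite]
    have h3 : linSl R (Pi.single j 1) = X j := by
      rw [linSl_apply]
      simp [Pi.single_apply, ite_smul]
    rw [h1, hℓI _ _ h2, h3]
  -- the big submodule `N` and the quotient
  set NB : Submodule (SS R r) (MT R M r) :=
    LMsmall R M r f ⊔
      Submodule.span (SS R r) {x | ∃ c ∈ G, x = linForm R M r c} ⊔
      Submodule.span (SS R r)
        {x | ∃ (i : Fin s) (m : M), x = linForm R M r (fun j => cc i j • m)} with hNBdef
  set NR := Submodule.restrictScalars R NB with hNRdef
  set lam : SS R r →ₗ[R] (M →ₗ[R] (MT R M r ⧸ NR)) :=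
    (TensorProduct.mk R (SS R r) M).compr₂ NR.mkQ with hlamdef
  have hlam_apply : ∀ (p : SS R r) (m : M),
      lam p m = Submodule.Quotient.mk (p ⊗ₜ[R] m) := fun p m => rfl
  have hJN : ∀ p ∈ J, ∀ m : M, p ⊗ₜ[R] m ∈ NB := by
    intro p hp
    induction hp using Submodule.span_induction with
    | mem x hx =>
        intro m
        rcases hx with ⟨b, hb, rfl⟩ | ⟨i, rfl⟩
        · rw [linSl_tmul]
          refine Submodule.mem_sup_left (Submodule.mem_sup_left ?_)
          exact Submodule.subset_span ⟨_, Submodule.subset_span ⟨b, hb, m, rfl⟩, rfl⟩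
        · rw [linSl_tmul]
          refine Submodule.mem_sup_right ?_
          exact Submodule.subset_span ⟨i, m, rfl⟩
    | zero => intro m; rw [TensorProduct.zero_tmul]; exact zero_mem _
    | add x y hx hy ihx ihy =>
        intro m; rw [TensorProduct.add_tmul]; exact add_mem (ihx m) (ihy m)
    | smul a x hx ih =>
        intro m
        have hs : (a • x) ⊗ₜ[R] m = a • (x ⊗ₜ[R] m) := (TensorProduct.smul_tmul' a x m).symm
        rw [hs]
        exact Submodule.smul_mem _ _ (ih m)
  have hlamker : J.restrictScalars R ≤ LinearMap.ker lam := by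
    intro p hp
    rw [LinearMap.mem_ker]
    ext m
    rw [hlam_apply]
    simpa [Submodule.Quotient.mk_eq_zero, hNRdef] using hJN p hp m
  set lambar : Bq →ₗ[R] (M →ₗ[R] (MT R M r ⧸ NR)) :=
    (Submodule.liftQ (J.restrictScalars R) lam hlamker).comp
      ((Submodule.Quotient.restrictScalarsEquiv R J).symm.toLinearMap) with hlbardef
  have hlambar_mk : ∀ (p : SS R r) (m : M),
      lambar (mkJ p) m = Submodule.Quotient.mk (p ⊗ₜ[R] m) := by
    intro p m
    rfl
  set ψ0 : (↥(symPow R (IdealQuot R I 𝔞) k) ⊗[R] M) →ₗ[R] (MT R M r ⧸ NR) :=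
    TensorProduct.lift ((lambar.comp Θ.toLinearMap).comp
      (symPow R (IdealQuot R I 𝔞) k).subtype) with hψ0def
  have hψ0_apply : ∀ (x : ↥(symPow R (IdealQuot R I 𝔞) k)) (m : M),
      ψ0 (x ⊗ₜ[R] m) = lambar (Θ ↑x) m := fun x m => rfl
  have hΘdeg : ∀ (n : ℕ) (x : SymmetricAlg R (IdealQuot R I 𝔞)),
      x ∈ symPow R (IdealQuot R I 𝔞) n →
      ∃ p ∈ homogeneousSubmodule (Fin r) R n, Θ x = mkJ p := by
    intro n x hx
    refine Submodule.pow_induction_on_left'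
      (M := LinearMap.range (symmIota R (IdealQuot R I 𝔞)))
      (C := fun n x _ => ∃ p ∈ homogeneousSubmodule (Fin r) R n, Θ x = mkJ p) ?_ ?_ ?_ hx
    · intro c
      exact ⟨C c, (mem_homogeneousSubmodule _ _).mpr (isHomogeneous_C _ _), hΘalg c⟩
    · rintro x y i hx hy ⟨p, hp, hxp⟩ ⟨q, hq, hyq⟩
      exact ⟨p + q, add_mem hp hq, by rw [map_add, hxp, hyq, map_add]⟩
    · rintro m hm i x hx ⟨p, hp, hxp⟩
      obtain ⟨ν, rfl⟩ := hm
      obtain ⟨y, rfl⟩ := Submodule.Quotient.mk_surjective _ ν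
      obtain ⟨b, hb⟩ := hsurjπ ↑y y.2
      have hΘm : Θ (symmIota R (IdealQuot R I 𝔞) (Submodule.Quotient.mk y))
          = mkJ (linSl R b) := by
        exact (hΘι _).trans (hℓI y b hb)
      have hlin1 : linSl R b ∈ homogeneousSubmodule (Fin r) R 1 := by
        rw [linSl_apply]
        exact Submodule.sum_mem _ fun j _ => Submodule.smul_mem _ _
          ((mem_homogeneousSubmodule _ _).mpr (isHomogeneous_X _ _))
      refine ⟨linSl R b * p, ?_, by rw [map_mul, hΘm, hxp, ← map_mul]⟩
      have hmm := MvPolynomial.homogeneousSubmodule_mul (σ := Fin r) (R := R) 1 i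
        (Submodule.mul_mem_mul hlin1 hp)
      have h1i : i.succ = 1 + i := (Nat.add_comm 1 i).symm
      rw [h1i]
      exact hmm
  -- ψ lands in the image of the degree-k part
  have hPmem : ∀ z, ψ0 z ∈ Submodule.map NR.mkQ (mtGrade R M r k) := by
    intro z
    induction z using TensorProduct.induction_on with
    | zero => rw [map_zero]; exact zero_mem _
    | tmul x m =>
        obtain ⟨p, hp, hxp⟩ := hΘdeg k ↑x x.2
        rw [hψ0_apply, hxp, hlambar_mk]
        refine ⟨p ⊗ₜ[R] m, ?_, rfl⟩
        have hr : (LinearMap.rTensor M (homogeneousSubmodule (Fin r) R k).subtype)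
            ((⟨p, hp⟩ : ↥(homogeneousSubmodule (Fin r) R k)) ⊗ₜ[R] m) = p ⊗ₜ[R] m := by
          rw [LinearMap.rTensor_tmul]
          rfl
        exact ⟨_, hr⟩
    | add x y ihx ihy => rw [map_add]; exact add_mem ihx ihy
  set ψ : (↥(symPow R (IdealQuot R I 𝔞) k) ⊗[R] M) →ₗ[R]
      ↥(Submodule.map NR.mkQ (mtGrade R M r k)) := ψ0.codRestrict _ hPmem with hψdef
  have hψval : ∀ z, (ψ z : MT R M r ⧸ NR) = ψ0 z := fun z => rfl
  -- surjectivity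
  have hsurj : Function.Surjective ψ := by
    rintro ⟨yy, hyy⟩
    obtain ⟨u, hu, rfl⟩ := hyy
    obtain ⟨w, rfl⟩ := hu
    suffices hrange : NR.mkQ
        ((LinearMap.rTensor M (homogeneousSubmodule (Fin r) R k).subtype) w)
        ∈ LinearMap.range ψ0 by
      obtain ⟨z, hz⟩ := hrange
      exact ⟨z, Subtype.ext hz⟩
    induction w using TensorProduct.induction_on with
    | zero => rw [map_zero, map_zero]; exact zero_mem _
    | add x y ihx ihy => rw [map_add, map_add]; exact add_mem ihx ihy
    | tmul pp m =>
        obtain ⟨p, hp⟩ := pp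
        rw [LinearMap.rTensor_tmul]
        simp only [Submodule.subtype_apply]
        have hmono : ∀ (α : Fin r →₀ ℕ) (hα : (∑ j, α j) = k) (c : R),
            NR.mkQ ((monomial α c : SS R r) ⊗ₜ[R] m) ∈ LinearMap.range ψ0 := by
          intro α hα c
          have hXprod : (∏ j, (X j : SS R r) ^ α j) = monomial α 1 := by
            rw [monomial_eq, C_1, one_mul, Finsupp.prod_fintype]
            intro j
            exact pow_zero _
          have hΘx : Θ ↑(symPowElt f I 𝔞 hfI k α hα) = mkJ (monomial α 1) := by
            have h2 : (↑(symPowElt f I 𝔞 hfI k α hα) : SymmetricAlg R (IdealQuot R I 𝔞))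
                = ∏ j, symmIota R (IdealQuot R I 𝔞) (fbar R f I 𝔞 hfI j) ^ α j := rfl
            rw [h2, ← hXprod, map_prod, map_prod]
            exact Finset.prod_congr rfl fun j _ => by rw [map_pow, map_pow, hΘfbar j]
          refine ⟨(symPowElt f I 𝔞 hfI k α hα) ⊗ₜ[R] (c • m), ?_⟩
          rw [hψ0_apply, hΘx, hlambar_mk]
          have hct : (monomial α 1 : SS R r) ⊗ₜ[R] (c • m)
              = (monomial α c : SS R r) ⊗ₜ[R] m := by
            rw [TensorProduct.tmul_smul, TensorProduct.smul_tmul', smul_monomial,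
              smul_eq_mul, mul_one]
          rw [hct]
          rfl
        have hhom : IsHomogeneous p k := (mem_homogeneousSubmodule _ _).mp hp
        have hdecomp : (p : SS R r) ⊗ₜ[R] m
            = ∑ α ∈ p.support, (monomial α (coeff α p) : SS R r) ⊗ₜ[R] m := by
          conv_lhs => rw [← support_sum_monomial_coeff p]
          rw [TensorProduct.sum_tmul]
        rw [hdecomp, map_sum]
        refine Submodule.sum_mem _ fun α hα => ?_
        refine hmono α ?_ _
        have h1 : ∑ j ∈ α.support, α j = k := by
          have := hhom (mem_support_iff.mp hα)
          simpa [Finsupp.weight_apply, Finsupp.sum] using this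
        rw [← h1]
        exact (Finset.sum_subset (Finset.subset_univ _)
          (fun x _ hx => Finsupp.notMem_support_iff.mp hx)).symm
  -- Fbar and compatibility
  have hFJ : ∀ n : ℕ, (J.restrictScalars R) ≤ LinearMap.ker (Fmap R f I 𝔞 hfI n) := by
    intro n p hp
    exact LinearMap.mem_ker.mpr (Fmap_jet f cc I 𝔞 hfI hcc𝔞 h𝔞I n p hp)
  letI : ∀ n : ℕ, AddCommGroup ↥(symPow R (IdealQuot R I 𝔞) n) :=
    fun n => Submodule.addCommGroup _
  set Fbar : ∀ n : ℕ, Bq →ₗ[R] ↥(symPow R (IdealQuot R I 𝔞) n) := fun n =>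
    (Submodule.liftQ (J.restrictScalars R) (Fmap R f I 𝔞 hfI n) (hFJ n)).comp
      ((Submodule.Quotient.restrictScalarsEquiv R J).symm.toLinearMap) with hFbardef
  have hFbar_mk : ∀ (n : ℕ) (p : SS R r), Fbar n (mkJ p) = Fmap R f I 𝔞 hfI n p :=
    fun n p => rfl
  have hcompat : ∀ (n : ℕ) (x : SymmetricAlg R (IdealQuot R I 𝔞)),
      x ∈ symPow R (IdealQuot R I 𝔞) n →
      ((Fbar n (Θ x)) : SymmetricAlg R (IdealQuot R I 𝔞)) = x := by
    intro n x hx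
    refine Submodule.pow_induction_on_left'
      (M := LinearMap.range (symmIota R (IdealQuot R I 𝔞)))
      (C := fun n x _ => ((Fbar n (Θ x)) : SymmetricAlg R (IdealQuot R I 𝔞)) = x)
      ?_ ?_ ?_ hx
    · intro c
      rw [hΘalg, hFbar_mk, C_apply, Fmap_monomial,
        dif_pos (by simp : (∑ j, (0 : Fin r →₀ ℕ) j) = 0)]
      rw [SetLike.val_smul]
      show c • (symProd R f I 𝔞 hfI 0) = _
      rw [symProd_zero, Algebra.algebraMap_eq_smul_one]
    · intro x y i hx hy ihx ihy
      rw [map_add, map_add]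
      push_cast
      rw [ihx, ihy]
    · rintro m hm i x hx ih
      obtain ⟨ν, rfl⟩ := hm
      obtain ⟨y, rfl⟩ := Submodule.Quotient.mk_surjective _ ν
      obtain ⟨b, hb⟩ := hsurjπ ↑y y.2
      obtain ⟨p, hp⟩ := Ideal.Quotient.mk_surjective (I := J) (Θ x)
      have hmkp : mkJ p = Θ x := hp
      have hΘm : Θ (symmIota R (IdealQuot R I 𝔞) (Submodule.Quotient.mk y))
          = mkJ (linSl R b) := by
        exact (hΘι _).trans (hℓI y b hb)
      rw [map_mul, hΘm, ← hmkp, ← map_mul, hFbar_mk]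
      have hv := Fmap_linS_mul f I 𝔞 hfI b (hπI b) i p
      rw [hv]
      have hy2 : (Submodule.Quotient.mk (⟨piF R f b, hπI b⟩ : ↥I) : IdealQuot R I 𝔞)
          = Submodule.Quotient.mk y := congrArg _ (Subtype.ext hb)
      rw [hy2]
      congr 1
      have ih2 := ih
      rw [← hmkp, hFbar_mk] at ih2
      exact ih2
  -- conclusion
  refine ⟨ψ, hsurj, ?_⟩
  intro hTor
  set Φ : MT R M r →ₗ[R] (↥(symPow R (IdealQuot R I 𝔞) k) ⊗[R] M) :=
    LinearMap.rTensor M (Fmap R f I 𝔞 hfI k) with hΦdef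
  have hΦlin : ∀ (q : SS R r) (b : Fin r → R), piF R f b ∈ 𝔞 → ∀ m : M,
      Φ (q • linForm R M r (fun j => b j • m)) = 0 := by
    intro q b hba m
    rw [smul_linForm_eq, hΦdef, LinearMap.rTensor_tmul,
      Fmap_mul_linS_zero f I 𝔞 hfI b (h𝔞I hba) ((Submodule.Quotient.mk_eq_zero _).mpr hba) k q,
      TensorProduct.zero_tmul]
  set linFormL : (Fin r → M) →ₗ[R] MT R M r :=
    ∑ j, (TensorProduct.mk R (SS R r) M (X j)).comp (LinearMap.proj j) with hLFdef
  have hLF : ∀ c : Fin r → M, linFormL c = linForm R M r c := by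
    intro c
    rw [hLFdef]
    simp [linForm]
  have hΦsyzIm : ∀ (q : SS R r), ∀ c ∈ syzImage R M r f,
      Φ (q • linForm R M r c) = 0 := by
    intro q c hc
    set smulQ : MT R M r →ₗ[R] MT R M r :=
      { toFun := fun x => q • x
        map_add' := fun x y => smul_add q x y
        map_smul' := fun t x => smul_comm q t x } with hsmulQdef
    have hgen : ∀ v ∈ {v : Fin r → M | ∃ z ∈ syzMod R R r f, ∃ m : M, v = fun i => z i • m},
        (Φ.comp (smulQ.comp linFormL)) v = 0 := by
      rintro v ⟨z, hz, m, rfl⟩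
      have hz0 : piF R f z ∈ 𝔞 := by
        rw [show piF R f z = 0 from hz]
        exact zero_mem 𝔞
      have happ : (Φ.comp (smulQ.comp linFormL)) (fun i => z i • m)
          = Φ (q • linForm R M r (fun i => z i • m)) := by
        rw [LinearMap.comp_apply, LinearMap.comp_apply, hLF]
        rfl
      rw [happ]
      exact hΦlin q z hz0 m
    have hle : syzImage R M r f ≤ LinearMap.ker (Φ.comp (smulQ.comp linFormL)) :=
      Submodule.span_le.mpr (fun v hv => LinearMap.mem_ker.mpr (hgen v hv))
    have hcm := LinearMap.mem_ker.mp (hle hc)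
    rw [LinearMap.comp_apply, LinearMap.comp_apply, hLF] at hcm
    exact hcm
  have hNBspan : NB = Submodule.span (SS R r)
      (({x | ∃ c ∈ syzImage R M r f, x = linForm R M r c} ∪
        {x | ∃ c ∈ G, x = linForm R M r c}) ∪
        {x | ∃ (i : Fin s) (m : M), x = linForm R M r (fun j => cc i j • m)}) := by
    rw [Submodule.span_union, Submodule.span_union, hNBdef]
    rfl
  have hΦN : NR ≤ LinearMap.ker Φ := by
    intro u hu
    have hu' : u ∈ NB := hu
    clear hu
    rw [hNBspan] at hu'
    rw [LinearMap.mem_ker]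
    have key : ∀ q : SS R r, Φ (q • u) = 0 := by
      induction hu' using Submodule.span_induction with
      | mem x hx =>
          rcases hx with (⟨c, hc, rfl⟩ | ⟨c, hcG, rfl⟩) | ⟨i, m, rfl⟩
          · exact fun q => hΦsyzIm q c hc
          · exact fun q => hΦsyzIm q c (hTor (hGsub c hcG))
          · exact fun q => hΦlin q (cc i) (hcc𝔞 i) m
      | zero => intro q; rw [smul_zero, map_zero]
      | add x y hx hy ihx ihy => intro q; rw [smul_add, map_add, ihx q, ihy q, add_zero]
      | smul a x hx ih => intro q; rw [smul_smul]; exact ih (q * a)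
    simpa using key 1
  set Φbar := Submodule.liftQ NR Φ hΦN with hΦbardef
  have hleft : ∀ z, Φbar (ψ0 z) = z := by
    intro z
    induction z using TensorProduct.induction_on with
    | zero => rw [map_zero, map_zero]
    | add x y ihx ihy => rw [map_add, map_add, ihx, ihy]
    | tmul x m =>
        obtain ⟨p, hp⟩ := Ideal.Quotient.mk_surjective (I := J) (Θ ↑x)
        have hmkp : mkJ p = Θ ↑x := hp
        rw [hψ0_apply, ← hmkp, hlambar_mk]
        have hq : Φbar (Submodule.Quotient.mk (p ⊗ₜ[R] m)) = Φ (p ⊗ₜ[R] m) := rfl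
        rw [hq, hΦdef, LinearMap.rTensor_tmul]
        have hx2 : Fmap R f I 𝔞 hfI k p = x := by
          apply Subtype.ext
          have hcc2 := hcompat k ↑x x.2
          rw [← hmkp, hFbar_mk] at hcc2
          exact hcc2
        rw [hx2]
  have hinj : Function.Injective ψ := by
    intro a b hab
    have hab0 : ψ0 a = ψ0 b := congrArg Subtype.val hab
    calc a = Φbar (ψ0 a) := (hleft a).symm
    _ = Φbar (ψ0 b) := by rw [hab0]
    _ = b := hleft b
  exact ⟨hinj, hsurj⟩
end
end

section
/- Let (R, m, k) be a Noetherian local ring and S a Noetherian standard graded R-algebra. For integers s ≥ t, let ψ: S_t → Hom_R(S_{s−t}, S_s) be the natural map given by the multiplication of S. If H^0_{S_+}(S ⊗_R k)_t = 0, then ψ ⊗_R k is injective. -/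
/-!
Formalization of statements from:
"Cohen-Macaulayness and canonical module of residual intersections"
(Chardin, Naeliton, Tran).
-/

noncomputable section
open RingTheory.Sequence
open scoped TensorProduct
open scoped Pointwise

/-- The multiplication map `S_t → Hom_R(S_{s-t}, S_s)` of a graded algebra,
in curried bilinear form. -/
noncomputable def gradedMulMap (R : Type) [CommRing R] (A : Type) [CommRing A]
    [Algebra R A] (𝒜 : ℕ → Submodule R A) [GradedAlgebra 𝒜] (s t : ℕ) (hts : t ≤ s) :
    ↥(𝒜 t) →ₗ[R] ↥(𝒜 (s - t)) →ₗ[R] ↥(𝒜 s) where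
  toFun x :=
    { toFun := fun y => ⟨(x : A) * (y : A), by
        have h := SetLike.mul_mem_graded x.2 y.2
        rwa [Nat.add_sub_cancel' hts] at h⟩
      map_add' := fun y z => Subtype.ext (by simp [mul_add])
      map_smul' := fun c y => Subtype.ext (by simp [mul_smul_comm]) }
  map_add' x x' := LinearMap.ext fun y => Subtype.ext (by simp [add_mul])
  map_smul' c x := LinearMap.ext fun y => Subtype.ext (by simp [smul_mul_assoc])

/-- **Lemma 6.5.** Let `(R, 𝔪, k)` be a Noetherian local ring and `S` a Noetherian
standard graded `R`-algebra.  For `s ≥ t` let `ψ : S_t → Hom_R(S_{s-t}, S_s)` be the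
natural map given by multiplication.  If `H^0_{S_+}(S ⊗_R k)_t = 0`, then `ψ ⊗ k` is
injective. -/
theorem graded_mul_injective_mod_m
    (R : Type) [CommRing R] [IsLocalRing R] [IsNoetherianRing R]
    (A : Type) [CommRing A] [Algebra R A] [IsNoetherianRing A]
    (𝒜 : ℕ → Submodule R A) [GradedAlgebra 𝒜] (hstd : ∀ n, 𝒜 n = 𝒜 1 ^ n)
    (s t : ℕ) (hts : t ≤ s)
    (hH0 : ∀ x ∈ LinearMap.range
        (LinearMap.rTensor (IsLocalRing.ResidueField R) (𝒜 t).subtype),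
      (∃ n : ℕ, ∀ a ∈ ((HomogeneousIdeal.irrelevant 𝒜).toIdeal) ^ n, a • x = 0) →
        x = 0) :
    Function.Injective
      (LinearMap.rTensor (IsLocalRing.ResidueField R) (gradedMulMap R A 𝒜 s t hts)) := by
  classical
  set κ := IsLocalRing.ResidueField R with hκ
  set ψ := gradedMulMap R A 𝒜 s t hts with hψ
  suffices h : ∀ z, LinearMap.rTensor κ ψ z = 0 → z = 0 by
    intro a b hab
    have := h (a - b) (by
      show LinearMap.rTensor (IsLocalRing.ResidueField R) ψ (a - b) = 0
      rw [sub_eq_add_neg, ← neg_one_smul R b, LinearMap.map_add, LinearMap.map_smul, hab]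
      nth_rewrite 1 [← one_smul R (LinearMap.rTensor (IsLocalRing.ResidueField R) ψ b)]
      rw [← add_smul, add_neg_cancel, zero_smul])
    exact sub_eq_zero.mp this
  intro z hz
  set ι := (𝒜 t).subtype with hι
  set x := LinearMap.rTensor κ ι z with hx
  -- Step 1: multiplication by elements of `𝒜 (s - t)` on `x` factors through `ψ`.
  have key : ∀ (y : ↥(𝒜 (s - t))) (w : ↥(𝒜 t) ⊗[R] κ),
      (y : A) • (LinearMap.rTensor κ ι w)
        = LinearMap.rTensor κ (𝒜 s).subtype (LinearMap.rTensor κ (ψ.flip y) w) := by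
    intro y w
    induction w using TensorProduct.induction_on with
    | zero => simp
    | tmul a c =>
        simp only [LinearMap.rTensor_tmul]
        rw [TensorProduct.smul_tmul']
        congr 1
        show (y : A) • (a : A) = ((ψ a y : ↥(𝒜 s)) : A)
        simp [hψ, gradedMulMap, smul_eq_mul, mul_comm]
    | add u v hu hv => simp [smul_add, hu, hv]
  have hxzero : ∀ v : A, v ∈ 𝒜 (s - t) → v • x = 0 := by
    intro v hv
    have hfac : ψ.flip ⟨v, hv⟩
        = (LinearMap.applyₗ (⟨v, hv⟩ : ↥(𝒜 (s - t)))).comp ψ := rfl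
    rw [hx, key ⟨v, hv⟩ z, hfac, LinearMap.rTensor_comp, LinearMap.comp_apply, hz,
      map_zero, map_zero]
  -- Step 2: the irrelevant ideal is contained in the span of `𝒜 1`.
  have pow_le_span : ∀ j : ℕ, ∀ b ∈ (𝒜 1) ^ (j + 1), b ∈ Ideal.span (𝒜 1 : Set A) := by
    intro j b hb
    rw [pow_succ'] at hb
    exact Submodule.mul_induction_on hb
      (fun m hm n _ => Ideal.mul_mem_right n _ (Ideal.subset_span hm))
      (fun u v hu hv => Ideal.add_mem _ hu hv)
  have hirr : (HomogeneousIdeal.irrelevant 𝒜).toIdeal ≤ Ideal.span (𝒜 1 : Set A) := by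
    intro a ha
    have ha' : GradedRing.proj 𝒜 0 a = 0 := ha
    rw [← DirectSum.sum_support_decompose 𝒜 a]
    apply Ideal.sum_mem
    intro i hi
    rcases Nat.eq_zero_or_pos i with h0 | hpos
    · subst h0
      have : ((DirectSum.decompose 𝒜 a 0 : ↥(𝒜 0)) : A) = GradedRing.proj 𝒜 0 a := rfl
      rw [this, ha']
      exact zero_mem _
    · obtain ⟨j, rfl⟩ : ∃ j, i = j + 1 := ⟨i - 1, (Nat.succ_pred_eq_of_pos hpos).symm⟩
      have hmem : ((DirectSum.decompose 𝒜 a (j + 1) : ↥(𝒜 (j + 1))) : A) ∈ 𝒜 (j + 1) :=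
        SetLike.coe_mem _
      have hmem2 : ((DirectSum.decompose 𝒜 a (j + 1) : ↥(𝒜 (j + 1))) : A) ∈ 𝒜 1 ^ (j + 1) := by
        rw [← hstd (j + 1)]; exact hmem
      exact pow_le_span j _ hmem2
  -- Step 3: powers of the span of `𝒜 1` land in spans of graded components.
  have hpowspan : ∀ n : ℕ, (Ideal.span (𝒜 1 : Set A)) ^ n ≤ Ideal.span (𝒜 n : Set A) := by
    intro n
    induction n with
    | zero =>
        have h1 : (1 : A) ∈ Ideal.span ((𝒜 0 : Set A)) :=
          Ideal.subset_span SetLike.GradedOne.one_mem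
        rw [pow_zero, Ideal.one_eq_top, (Ideal.eq_top_iff_one _).2 h1]
    | succ n ih =>
        calc (Ideal.span (𝒜 1 : Set A)) ^ (n + 1)
            = (Ideal.span (𝒜 1 : Set A)) ^ n * Ideal.span (𝒜 1 : Set A) := pow_succ _ _
          _ ≤ Ideal.span (𝒜 n : Set A) * Ideal.span (𝒜 1 : Set A) :=
              Ideal.mul_mono ih le_rfl
          _ = Ideal.span ((𝒜 n : Set A) * (𝒜 1 : Set A)) := Ideal.span_mul_span' _ _
          _ ≤ Ideal.span (𝒜 (n + 1) : Set A) := by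
              apply Ideal.span_mono
              rw [Set.mul_subset_iff]
              intro u hu v hv
              exact SetLike.mul_mem_graded hu hv
  -- Step 4: `x` is annihilated by a power of the irrelevant ideal, hence `x = 0`.
  have hkill : ∀ a ∈ ((HomogeneousIdeal.irrelevant 𝒜).toIdeal) ^ (s - t), a • x = 0 := by
    intro a ha
    have h1 : a ∈ (Ideal.span (𝒜 1 : Set A)) ^ (s - t) :=
      Ideal.pow_right_mono hirr (s - t) ha
    have h2 : a ∈ Ideal.span (𝒜 (s - t) : Set A) := hpowspan (s - t) h1
    have h3 : Ideal.span (𝒜 (s - t) : Set A)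
        ≤ LinearMap.ker (LinearMap.toSpanSingleton A (A ⊗[R] κ) x) := by
      rw [Ideal.span_le]
      intro v hv
      simp only [SetLike.mem_coe, LinearMap.mem_ker, LinearMap.toSpanSingleton_apply]
      exact hxzero v hv
    simpa using h3 h2
  have hx0 : x = 0 := hH0 x ⟨z, rfl⟩ ⟨s - t, hkill⟩
  -- Step 5: the inclusion `𝒜 t → A` splits, so `z = 0`.
  set π : A →ₗ[R] ↥(𝒜 t) :=
    (DirectSum.component R ℕ (fun i => ↥(𝒜 i)) t).comp
      (DirectSum.decomposeLinearEquiv 𝒜).toLinearMap with hπ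
  have hπι : π.comp ι = LinearMap.id := by
    ext a
    simp only [hπ, hι, LinearMap.comp_apply, LinearMap.id_apply,
      LinearEquiv.coe_coe, Submodule.coe_subtype, DirectSum.decomposeLinearEquiv_apply,
      DirectSum.decompose_coe, DirectSum.component]
    exact congrArg Subtype.val (DirectSum.of_eq_same (β := fun i => ↥(𝒜 i)) t a)
  calc z = LinearMap.rTensor κ (π.comp ι) z := by
        rw [hπι, LinearMap.rTensor_id]; rfl
    _ = LinearMap.rTensor κ π x := by rw [LinearMap.rTensor_comp]; rfl
    _ = 0 := by rw [hx0, map_zero]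
end
end
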